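/- arXiv:0807.2971 — 10 statements merged into one kernel-verified Lean document; each statement's English description precedes it below -/
import Mathlib

section
/- For every real number x, one has x · ∑_{k=0}^∞ (c_k x^k / k!) = e^x · R(x); equivalently, for x ≠ 0, ∑_{k=0}^∞ c_k x^k / k! = e^x R(x) / x. Both series converge absolutely for every real x. -/
open ArithmeticFunction

/-- The real value of the Riemann zeta function at a real argument. -/
noncomputable def zetaR (s : ℝ) : ℝ := (riemannZeta (s : ℂ)).re

/-- The Riesz function `R(x) = x ∑_{k=0}^∞ (-1)^k x^k / (k! ζ(2k+2))`. -/
noncomputable def RieszR (x : ℝ) : ℝ :=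
  x * ∑' k : ℕ, (-1 : ℝ) ^ k * x ^ k / (k.factorial * zetaR (2 * k + 2))

/-- The Báez-Duarte sequence `c_k = ∑_{j=0}^k (-1)^j C(k,j) / ζ(2j+2)`. -/
noncomputable def cBD (k : ℕ) : ℝ :=
  ∑ j ∈ Finset.range (k + 1), (-1 : ℝ) ^ j * (k.choose j) / zetaR (2 * j + 2)

/-!
Both series are exponential generating functions: with `a j = (-1)^j / ζ(2j+2)`, the Riesz
series is `∑ a_k x^k / k!` and `c` is the binomial transform of `a`. Since `|a j| ≤ 1` (as
`ζ ≥ 1` on `(1, ∞)`), both converge absolutely, and the Cauchy product of `∑ a_k x^k / k!`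
with `e^x = ∑ x^k / k!` is `∑ c_k x^k / k!`.
-/

open Finset

lemma zetaR_eq_tsum {s : ℝ} (hs : 1 < s) : zetaR s = ∑' n : ℕ, 1 / (n : ℝ) ^ s := by
  have hcast : ((∑' n : ℕ, 1 / (n : ℝ) ^ s : ℝ) : ℂ) = ∑' n : ℕ, 1 / (n : ℂ) ^ (s : ℂ) := by
    rw [Complex.ofReal_tsum]
    push_cast [Complex.ofReal_cpow (Nat.cast_nonneg _)]
    rfl
  rw [zetaR, zeta_eq_tsum_one_div_nat_cpow (by simpa using hs), ← hcast, Complex.ofReal_re]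

lemma one_le_zetaR {s : ℝ} (hs : 1 < s) : 1 ≤ zetaR s := by
  rw [zetaR_eq_tsum hs]
  simpa using (Real.summable_one_div_nat_rpow.mpr hs).le_tsum 1 (fun n _ => by positivity)

lemma summable_abs_mul_pow_div_factorial {a : ℕ → ℝ} {C r : ℝ} (ha : ∀ n, |a n| ≤ C * r ^ n)
    (x : ℝ) : Summable fun n => |a n * x ^ n / n.factorial| := by
  refine .of_nonneg_of_le (fun n => abs_nonneg _) (fun n => ?_)
    ((Real.summable_pow_div_factorial (r * |x|)).mul_left C)
  rw [abs_div, abs_mul, abs_pow, Nat.abs_cast, mul_pow, ← mul_div_assoc, ← mul_assoc]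
  gcongr
  exact ha n

lemma abs_sum_choose_mul_le {a : ℕ → ℝ} {C : ℝ} (ha : ∀ j, |a j| ≤ C) (k : ℕ) :
    |∑ j ∈ range (k + 1), (k.choose j : ℝ) * a j| ≤ C * 2 ^ k :=
  calc |∑ j ∈ range (k + 1), (k.choose j : ℝ) * a j|
      ≤ ∑ j ∈ range (k + 1), (k.choose j : ℝ) * C := by
        refine (abs_sum_le_sum_abs _ _).trans (sum_le_sum fun j _ => ?_)
        rw [abs_mul, Nat.abs_cast]
        gcongr
        exact ha j
    _ = C * 2 ^ k := by
        rw [← sum_mul, mul_comm, ← Nat.cast_sum, Nat.sum_range_choose, Nat.cast_pow,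
          Nat.cast_ofNat]

lemma tsum_mul_pow_div_factorial_mul_exp {a : ℕ → ℝ} {x : ℝ}
    (ha : Summable fun n => |a n * x ^ n / n.factorial|) :
    (∑' n, a n * x ^ n / n.factorial) * Real.exp x
      = ∑' n, (∑ j ∈ range (n + 1), (n.choose j : ℝ) * a j) * x ^ n / n.factorial := by
  have hexp : Summable fun n => ‖x ^ n / n.factorial‖ := by
    simpa [abs_div, abs_pow] using Real.summable_pow_div_factorial |x|
  rw [Real.exp_eq_exp_ℝ, NormedSpace.exp_eq_tsum_div,
    tsum_mul_tsum_eq_tsum_sum_range_of_summable_norm (f := fun n => a n * x ^ n / n.factorial)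
      ha hexp]
  refine tsum_congr fun n => ?_
  rw [sum_mul, sum_div]
  refine sum_congr rfl fun j hj => ?_
  have hjn : j ≤ n := Nat.lt_succ_iff.mp (mem_range.mp hj)
  have hfac : (n.factorial : ℝ) = n.choose j * j.factorial * (n - j).factorial := by
    exact_mod_cast (Nat.choose_mul_factorial_mul_factorial hjn).symm
  have hchoose : (n.choose j : ℝ) ≠ 0 := by exact_mod_cast (Nat.choose_pos hjn).ne'
  have hpow : x ^ n = x ^ j * x ^ (n - j) := by rw [← pow_add, Nat.add_sub_cancel' hjn]
  rw [hfac, hpow]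
  field_simp

theorem stmt0 (x : ℝ) :
    Summable (fun k : ℕ => |cBD k * x ^ k / k.factorial|) ∧
    Summable (fun k : ℕ => |(-1 : ℝ) ^ k * x ^ k / (k.factorial * zetaR (2 * k + 2))|) ∧
    x * ∑' k : ℕ, cBD k * x ^ k / k.factorial = Real.exp x * RieszR x := by
  set a : ℕ → ℝ := fun j => (-1) ^ j / zetaR (2 * j + 2)
  have hζ (j : ℕ) : 1 ≤ zetaR (2 * j + 2) := one_le_zetaR (by linarith [j.cast_nonneg (α := ℝ)])
  have ha (j : ℕ) : |a j| ≤ 1 := by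
    rw [abs_div, abs_pow, abs_neg, abs_one, one_pow, abs_of_pos (by linarith [hζ j])]
    exact div_le_one_of_le₀ (hζ j) (by linarith [hζ j])
  have hc : cBD = fun k => ∑ j ∈ range (k + 1), (k.choose j : ℝ) * a j := by
    ext k; exact sum_congr rfl fun j _ => by ring
  have hR (k : ℕ) : (-1 : ℝ) ^ k * x ^ k / (k.factorial * zetaR (2 * k + 2))
      = a k * x ^ k / k.factorial := by
    simp only [a]; ring
  have hsum_a := summable_abs_mul_pow_div_factorial (C := 1) (r := 1) (by simpa using ha) x
  refine ⟨?_, by simpa only [hR] using hsum_a, ?_⟩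
  · rw [hc]
    exact summable_abs_mul_pow_div_factorial (abs_sum_choose_mul_le ha) x
  · rw [RieszR, tsum_congr hR, hc, ← tsum_mul_pow_div_factorial_mul_exp hsum_a]
    ring
end

section
/- For every real number x > 0, the Riesz function satisfies R(x) = x ∑_{n=1}^∞ (μ(n)/n²) exp(-x/n²), where μ is the Möbius function, and the series on the right converges absolutely. -/
open ArithmeticFunction

open scoped LSeries.notation

section aux

lemma aux_base : Summable (fun n : ℕ => 1 / ((n : ℝ) + 1) ^ 2) := by
  have h := (summable_nat_add_iff 1).mpr
    (Real.summable_one_div_nat_pow.mpr (by norm_num : 1 < 2))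
  refine h.congr fun n => ?_
  push_cast
  ring_nf

lemma aux_mu_row (m : ℕ) (hm : 2 ≤ m) :
    Summable (fun n : ℕ => ((moebius (n + 1) : ℤ) : ℝ) / ((n : ℝ) + 1) ^ m) := by
  rw [← summable_abs_iff]
  refine Summable.of_nonneg_of_le (fun n => abs_nonneg _) (fun n => ?_) aux_base
  have h1 : (0:ℝ) < ((n : ℝ) + 1) := by positivity
  have hmu : |((moebius (n + 1) : ℤ) : ℝ)| ≤ 1 := by
    have := @abs_moebius_le_one (n + 1)
    exact_mod_cast (by exact_mod_cast this : |((moebius (n+1) : ℤ) : ℝ)| ≤ (1:ℝ))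
  rw [abs_div, abs_pow, abs_of_pos h1]
  have hpow : ((n : ℝ) + 1) ^ 2 ≤ ((n : ℝ) + 1) ^ m :=
    pow_le_pow_right₀ (by linarith) hm
  calc |((moebius (n + 1) : ℤ) : ℝ)| / ((n : ℝ) + 1) ^ m
      ≤ 1 / ((n : ℝ) + 1) ^ m := by
        gcongr
    _ ≤ 1 / ((n : ℝ) + 1) ^ 2 := by
        gcongr

lemma aux_mu_zeta (m : ℕ) (hm : 2 ≤ m) :
    zetaR m ≠ 0 ∧
    1 / zetaR m = ∑' n : ℕ, ((moebius (n + 1) : ℤ) : ℝ) / ((n : ℝ) + 1) ^ m := by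
  have hs : 1 < ((m : ℂ)).re := by
    simp only [Complex.natCast_re]
    exact_mod_cast lt_of_lt_of_le one_lt_two hm
  set M : ℝ := ∑' n : ℕ, ((moebius (n + 1) : ℤ) : ℝ) / ((n : ℝ) + 1) ^ m with hM
  -- L-series of moebius equals ofReal M
  have hLsum : LSeriesSummable ↗moebius (m : ℂ) := LSeriesSummable_moebius_iff.mpr hs
  have hterm : ∀ n : ℕ, LSeries.term ↗moebius (m : ℂ) (n + 1)
      = ((((moebius (n + 1) : ℤ) : ℝ) / ((n : ℝ) + 1) ^ m : ℝ) : ℂ) := by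
    intro n
    rw [LSeries.term_of_ne_zero (Nat.succ_ne_zero n)]
    rw [show ((n + 1 : ℕ) : ℂ) ^ (m : ℂ) = ((n + 1 : ℕ) : ℂ) ^ m from
      Complex.cpow_natCast _ m]
    push_cast
    ring
  have hLM : LSeries ↗moebius (m : ℂ) = (M : ℂ) := by
    rw [LSeries, Summable.tsum_eq_zero_add hLsum, LSeries.term_zero, zero_add]
    rw [hM, Complex.ofReal_tsum]
    exact tsum_congr hterm
  have hmul : riemannZeta (m : ℂ) * (M : ℂ) = 1 := by
    rw [← hLM, ← LSeries_zeta_eq_riemannZeta hs]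
    exact LSeries_zeta_mul_Lseries_moebius hs
  have hMne : (M : ℂ) ≠ 0 := by
    intro h
    rw [h, mul_zero] at hmul
    exact zero_ne_one hmul
  have hMne' : M ≠ 0 := fun h => hMne (by rw [h]; simp)
  have hzeta : riemannZeta (m : ℂ) = ((1 / M : ℝ) : ℂ) := by
    push_cast
    rw [eq_div_iff hMne]
    exact hmul
  have hzetaR : zetaR m = 1 / M := by
    unfold zetaR
    rw [show (((m : ℝ) : ℂ)) = (m : ℂ) by push_cast; ring, hzeta, Complex.ofReal_re]
  constructor
  · rw [hzetaR]; positivity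
  · rw [hzetaR]
    field_simp

end aux

theorem stmt1 (x : ℝ) (hx : 0 < x) :
    Summable (fun n : ℕ =>
      |((moebius (n + 1) : ℤ) : ℝ) / ((n : ℝ) + 1) ^ 2 * Real.exp (-x / ((n : ℝ) + 1) ^ 2)|) ∧
    RieszR x =
      x * ∑' n : ℕ,
        ((moebius (n + 1) : ℤ) : ℝ) / ((n : ℝ) + 1) ^ 2 * Real.exp (-x / ((n : ℝ) + 1) ^ 2) := by
  have hb : ∀ n : ℕ, (0:ℝ) < (n : ℝ) + 1 := fun n => by positivity
  constructor
  · refine Summable.of_nonneg_of_le (fun n => abs_nonneg _) (fun n => ?_) aux_base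
    rw [abs_mul, abs_div, abs_pow, abs_of_pos (hb n)]
    have hmu : |((moebius (n + 1) : ℤ) : ℝ)| ≤ 1 := by
      exact_mod_cast @abs_moebius_le_one (n + 1)
    have hexp : |Real.exp (-x / ((n : ℝ) + 1) ^ 2)| ≤ 1 := by
      rw [abs_of_pos (Real.exp_pos _), Real.exp_le_one_iff]
      have : (0:ℝ) ≤ x / ((n : ℝ) + 1) ^ 2 := by positivity
      rw [neg_div]
      linarith
    calc |((moebius (n + 1) : ℤ) : ℝ)| / ((n : ℝ) + 1) ^ 2 * |Real.exp (-x / ((n : ℝ) + 1) ^ 2)|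
        ≤ 1 / ((n : ℝ) + 1) ^ 2 * 1 := by
          gcongr
        _ = 1 / ((n : ℝ) + 1) ^ 2 := mul_one _
  · -- main identity
    set f : ℕ → ℕ → ℝ := fun k n =>
      ((-1 : ℝ) ^ k * x ^ k / k.factorial) *
        (((moebius (n + 1) : ℤ) : ℝ) / ((n : ℝ) + 1) ^ (2 * k + 2)) with hf
    have habs_le : ∀ k n, |f k n| ≤ (x ^ k / k.factorial) * (1 / ((n : ℝ) + 1) ^ 2) := by
      intro k n
      have hmu : |((moebius (n + 1) : ℤ) : ℝ)| ≤ 1 := by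
        exact_mod_cast @abs_moebius_le_one (n + 1)
      have h1 : (1:ℝ) ≤ (n : ℝ) + 1 := by
        have := (hb n); linarith [Nat.cast_nonneg (α := ℝ) n]
      have hpow : ((n : ℝ) + 1) ^ 2 ≤ ((n : ℝ) + 1) ^ (2 * k + 2) :=
        pow_le_pow_right₀ h1 (by omega)
      simp only [hf]
      rw [abs_mul, abs_div, abs_div, abs_mul, abs_pow, abs_pow, abs_pow, abs_neg, abs_one,
        one_pow, one_mul, abs_of_pos (hb n), abs_of_pos hx,
        abs_of_pos (by positivity : (0:ℝ) < (k.factorial : ℝ))]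
      have hmain : |((moebius (n + 1) : ℤ) : ℝ)| / ((n : ℝ) + 1) ^ (2 * k + 2)
          ≤ 1 / ((n : ℝ) + 1) ^ 2 :=
        div_le_div₀ zero_le_one hmu (by positivity) hpow
      exact mul_le_mul_of_nonneg_left hmain (by positivity)
    have hdom : Summable (fun p : ℕ × ℕ => (x ^ p.1 / p.1.factorial) * (1 / ((p.2 : ℝ) + 1) ^ 2)) :=
      Summable.mul_of_nonneg (f := fun k : ℕ => x ^ k / k.factorial)
        (g := fun n : ℕ => 1 / ((n : ℝ) + 1) ^ 2)
        (Real.summable_pow_div_factorial x) aux_base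
        (Pi.le_def.mpr fun k => by positivity) (Pi.le_def.mpr fun n => by positivity)
    have hF : Summable (Function.uncurry f) := by
      rw [← summable_abs_iff]
      exact Summable.of_nonneg_of_le (fun p => abs_nonneg _)
        (fun p => habs_le p.1 p.2) hdom
    have hrow : ∀ k : ℕ, Summable (f k) := fun k => (hF.prod_factor k)
    have hcol : ∀ n : ℕ, Summable (fun k => f k n) := by
      intro n
      have := (hF.prod_symm).prod_factor n
      exact this.congr fun k => rfl
    -- Step A: each coefficient expands
    have hA : ∀ k : ℕ, (-1 : ℝ) ^ k * x ^ k / (k.factorial * zetaR (2 * k + 2))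
        = ∑' n : ℕ, f k n := by
      intro k
      obtain ⟨hzne, hzeq⟩ := aux_mu_zeta (2 * k + 2) (by omega)
      have harg : (2 : ℝ) * (k : ℝ) + 2 = ((2 * k + 2 : ℕ) : ℝ) := by push_cast; ring
      rw [harg]
      have : ((-1 : ℝ) ^ k * x ^ k / k.factorial) * (1 / zetaR ((2 * k + 2 : ℕ) : ℝ))
          = (-1 : ℝ) ^ k * x ^ k / (k.factorial * zetaR ((2 * k + 2 : ℕ) : ℝ)) := by
        field_simp
      rw [← this, hzeq, ← tsum_mul_left]
    -- Step C: inner sum over k is the exponential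
    have hC : ∀ n : ℕ, (∑' k : ℕ, f k n)
        = ((moebius (n + 1) : ℤ) : ℝ) / ((n : ℝ) + 1) ^ 2 * Real.exp (-x / ((n : ℝ) + 1) ^ 2) := by
      intro n
      have hexp : Real.exp (-x / ((n : ℝ) + 1) ^ 2)
          = ∑' k : ℕ, (-x / ((n : ℝ) + 1) ^ 2) ^ k / k.factorial := by
        rw [Real.exp_eq_exp_ℝ, NormedSpace.exp_eq_tsum_div]
      have hfe : ∀ k : ℕ, f k n
          = ((moebius (n + 1) : ℤ) : ℝ) / ((n : ℝ) + 1) ^ 2 *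
            ((-x / ((n : ℝ) + 1) ^ 2) ^ k / k.factorial) := by
        intro k
        have hne : ((n : ℝ) + 1) ≠ 0 := ne_of_gt (hb n)
        have hkne : (k.factorial : ℝ) ≠ 0 := by positivity
        simp only [hf]
        have hp : (-x / ((n : ℝ) + 1) ^ 2) ^ k
            = (-1 : ℝ) ^ k * x ^ k / ((n : ℝ) + 1) ^ (2 * k) := by
          rw [div_pow, neg_pow, pow_mul]
        rw [hp]
        rw [show ((n : ℝ) + 1) ^ (2 * k + 2) = ((n : ℝ) + 1) ^ (2 * k) * ((n : ℝ) + 1) ^ 2 from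
          pow_add _ _ _]
        have h2k : ((n : ℝ) + 1) ^ (2 * k) ≠ 0 := by positivity
        have h2 : ((n : ℝ) + 1) ^ 2 ≠ 0 := by positivity
        field_simp
      rw [tsum_congr hfe, tsum_mul_left, ← hexp]
    -- assemble
    rw [RieszR]
    congr 1
    calc (∑' k : ℕ, (-1 : ℝ) ^ k * x ^ k / (k.factorial * zetaR (2 * k + 2)))
          = ∑' k : ℕ, ∑' n : ℕ, f k n := tsum_congr hA
      _ = ∑' n : ℕ, ∑' k : ℕ, f k n := (Summable.tsum_comm' hF hrow hcol).symm
      _ = ∑' n : ℕ, ((moebius (n + 1) : ℤ) : ℝ) / ((n : ℝ) + 1) ^ 2 *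
            Real.exp (-x / ((n : ℝ) + 1) ^ 2) := tsum_congr hC
end

section
/- For all real numbers b > 1 and a > 0, the function R_{ab}(x) = x ∑_{n=1}^∞ (μ(n)/n^b) exp(-x/n^a) satisfies R_{ab}(x) = O(x^{(1+a-b)/a}) as x → ∞, in the sense that there exist constants C and x₁ > 0 such that |R_{ab}(x)| ≤ C x^{(1+a-b)/a} for all x ≥ x₁. -/
open ArithmeticFunction

lemma exp_neg_le_factorial_div (u : ℝ) (hu : 0 < u) (k : ℕ) :
    Real.exp (-u) ≤ (k.factorial : ℝ) / u ^ k := by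
  have h1 : u ^ k / (k.factorial : ℝ) ≤ Real.exp u := by
    calc u ^ k / (k.factorial : ℝ)
        ≤ ∑ i ∈ Finset.range (k + 1), u ^ i / (i.factorial : ℝ) :=
          Finset.single_le_sum (f := fun i => u ^ i / (i.factorial : ℝ))
            (fun i _ => by positivity) (Finset.self_mem_range_succ k)
      _ ≤ Real.exp u := Real.sum_le_exp_of_nonneg hu.le _
  calc Real.exp (-u) = (Real.exp u)⁻¹ := Real.exp_neg u
    _ ≤ (u ^ k / (k.factorial : ℝ))⁻¹ := inv_anti₀ (by positivity) h1
    _ = (k.factorial : ℝ) / u ^ k := by rw [inv_div]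

lemma head_term_le (a b x m : ℝ) (ha : 0 < a) (hx : 1 ≤ x) (hm : 1 ≤ m)
    (hmx : m ≤ 2 * x ^ a⁻¹) (k : ℕ) (hk : b ≤ a * k) :
    m ^ (-b) * Real.exp (-x / m ^ a) ≤
      (k.factorial : ℝ) * 2 ^ (a * k - b) * x ^ (-(b / a)) := by
  have hx0 : (0 : ℝ) < x := lt_of_lt_of_le one_pos hx
  have hm0 : (0 : ℝ) < m := lt_of_lt_of_le one_pos hm
  have hma : (0 : ℝ) < m ^ a := Real.rpow_pos_of_pos hm0 a
  have hu : (0 : ℝ) < x / m ^ a := div_pos hx0 hma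
  have hxa : (0 : ℝ) < x ^ a⁻¹ := Real.rpow_pos_of_pos hx0 _
  calc m ^ (-b) * Real.exp (-x / m ^ a)
      ≤ m ^ (-b) * ((k.factorial : ℝ) / (x / m ^ a) ^ k) := by
        rw [neg_div]
        exact mul_le_mul_of_nonneg_left (exp_neg_le_factorial_div _ hu k)
          (Real.rpow_nonneg hm0.le _)
    _ = (k.factorial : ℝ) * m ^ (a * k - b) / x ^ (k : ℝ) := by
        rw [div_pow, ← Real.rpow_natCast (m ^ a) k, ← Real.rpow_mul hm0.le,
          ← Real.rpow_natCast x k, div_div_eq_mul_div,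
          show a * (k : ℝ) - b = -b + a * k by ring, Real.rpow_add hm0]
        ring
    _ ≤ (k.factorial : ℝ) * (2 * x ^ a⁻¹) ^ (a * k - b) / x ^ (k : ℝ) := by
        have h := Real.rpow_le_rpow hm0.le hmx (show (0:ℝ) ≤ a * k - b by linarith)
        have hxk : (0:ℝ) < x ^ (k:ℝ) := Real.rpow_pos_of_pos hx0 _
        exact (div_le_div_iff_of_pos_right hxk).mpr
          (mul_le_mul_of_nonneg_left h (by positivity))
    _ = (k.factorial : ℝ) * 2 ^ (a * k - b) * x ^ (-(b / a)) := by
        rw [Real.mul_rpow (by norm_num) hxa.le, ← Real.rpow_mul hx0.le,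
          div_eq_mul_inv, ← Real.rpow_neg hx0.le, mul_assoc, mul_assoc,
          ← Real.rpow_add hx0]
        rw [show a⁻¹ * (a * k - b) + -(k : ℝ) = -(b / a) by field_simp; ring]
        ring

open MeasureTheory in
lemma tail_sum_le (b : ℝ) (hb : 1 < b) (N : ℕ) (hN : 1 ≤ N) :
    ∑' n : ℕ, ((N : ℝ) + n + 1) ^ (-b) ≤ (N : ℝ) ^ (1 - b) / (b - 1) := by
  have hbneg : -b < -1 := by linarith
  have hN0 : (0 : ℝ) < N := by exact_mod_cast hN
  have hsum : Summable (fun n : ℕ => ((N : ℝ) + n + 1) ^ (-b)) := by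
    have h1 := Real.summable_nat_rpow.mpr hbneg
    have h2 := (summable_nat_add_iff (N + 1)).mpr h1
    exact h2.congr (fun n => by push_cast; ring_nf)
  have hint : IntegrableOn (fun x : ℝ => x ^ (-b)) (Set.Ioi (N : ℝ)) :=
    integrableOn_Ioi_rpow_of_lt hbneg hN0
  apply Summable.tsum_le_of_sum_le hsum
  intro s
  obtain ⟨M, hM⟩ := s.exists_nat_subset_range
  calc ∑ n ∈ s, ((N : ℝ) + n + 1) ^ (-b)
      ≤ ∑ n ∈ Finset.range M, ((N : ℝ) + n + 1) ^ (-b) :=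
        Finset.sum_le_sum_of_subset_of_nonneg hM (fun i _ _ => by positivity)
    _ ≤ ∫ x in (N : ℝ)..(N : ℝ) + M, x ^ (-b) := by
        have hanti : AntitoneOn (fun x : ℝ => x ^ (-b)) (Set.Icc (N : ℝ) ((N : ℝ) + M)) :=
          fun x hx y hy hxy =>
            Real.rpow_le_rpow_of_nonpos (lt_of_lt_of_le hN0 hx.1) hxy (by linarith)
        have := hanti.sum_le_integral
        refine le_trans (le_of_eq (Finset.sum_congr rfl fun i _ => ?_)) this
        push_cast; ring_nf
    _ ≤ ∫ x in Set.Ioi (N : ℝ), x ^ (-b) := by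
        rw [intervalIntegral.integral_of_le (by linarith [Nat.cast_nonneg (α := ℝ) M])]
        apply setIntegral_mono_set hint
        · filter_upwards [ae_restrict_mem measurableSet_Ioi] with x hx
          exact Real.rpow_nonneg (le_of_lt (lt_trans hN0 hx)) _
        · exact (Set.Ioc_subset_Ioi_self).eventuallyLE
    _ = -(N : ℝ) ^ (-b + 1) / (-b + 1) := integral_Ioi_rpow_of_lt hbneg hN0
    _ = (N : ℝ) ^ (1 - b) / (b - 1) := by
        rw [show -b + 1 = 1 - b by ring, div_eq_div_iff (by linarith) (by linarith)]
        ring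

/-- The generalized Riesz function
`R_{ab}(x) = x ∑_{n=1}^∞ (μ(n)/n^b) exp(-x/n^a)`. -/
noncomputable def Rab (a b x : ℝ) : ℝ :=
  x * ∑' n : ℕ,
    ((moebius (n + 1) : ℤ) : ℝ) / ((n : ℝ) + 1) ^ b * Real.exp (-x / ((n : ℝ) + 1) ^ a)

theorem stmt6 (a b : ℝ) (ha : 0 < a) (hb : 1 < b) :
    ∃ C x₁ : ℝ, 0 < x₁ ∧ ∀ x : ℝ, x₁ ≤ x → |Rab a b x| ≤ C * x ^ ((1 + a - b) / a) := by
  obtain ⟨k, hk⟩ : ∃ k : ℕ, b ≤ a * k := by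
    obtain ⟨k, hk⟩ := exists_nat_ge (b / a)
    exact ⟨k, by rw [mul_comm, ← div_le_iff₀ ha]; exact hk⟩
  set C₁ : ℝ := 2 * (k.factorial : ℝ) * 2 ^ (a * k - b) with hC₁
  refine ⟨C₁ + 1 / (b - 1), 1, one_pos, fun x hx => ?_⟩
  have hx0 : (0 : ℝ) < x := lt_of_lt_of_le one_pos hx
  have hxa : (1 : ℝ) ≤ x ^ a⁻¹ := Real.one_le_rpow hx (by positivity)
  have hxa0 : (0 : ℝ) < x ^ a⁻¹ := lt_of_lt_of_le one_pos hxa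
  set N : ℕ := ⌈x ^ a⁻¹⌉₊ with hNdef
  have hN1 : 1 ≤ N := Nat.one_le_iff_ne_zero.mpr (by
    simp only [hNdef, ne_eq, Nat.ceil_eq_zero, not_le]
    exact hxa0)
  have hNge : x ^ a⁻¹ ≤ (N : ℝ) := Nat.le_ceil _
  have hNle : (N : ℝ) ≤ 2 * x ^ a⁻¹ := by
    have := Nat.ceil_lt_add_one (le_of_lt hxa0)
    calc (N : ℝ) ≤ x ^ a⁻¹ + 1 := le_of_lt this
      _ ≤ 2 * x ^ a⁻¹ := by linarith
  -- the dominating nonnegative sequence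
  set g : ℕ → ℝ := fun n =>
    ((n : ℝ) + 1) ^ (-b) * Real.exp (-x / ((n : ℝ) + 1) ^ a) with hg
  set f : ℕ → ℝ := fun n =>
    ((moebius (n + 1) : ℤ) : ℝ) / ((n : ℝ) + 1) ^ b * Real.exp (-x / ((n : ℝ) + 1) ^ a)
    with hf
  have hpos : ∀ n : ℕ, (0 : ℝ) < ((n : ℝ) + 1) := fun n => by positivity
  have hexple : ∀ n : ℕ, Real.exp (-x / ((n : ℝ) + 1) ^ a) ≤ 1 := by
    intro n
    rw [Real.exp_le_one_iff, neg_div]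
    have : (0 : ℝ) < ((n : ℝ) + 1) ^ a := Real.rpow_pos_of_pos (hpos n) a
    have := div_nonneg hx0.le this.le
    linarith
  have hsum_h : Summable (fun n : ℕ => ((n : ℝ) + 1) ^ (-b)) := by
    have h1 := Real.summable_nat_rpow.mpr (show -b < -1 by linarith)
    have h2 := (summable_nat_add_iff 1).mpr h1
    exact h2.congr (fun n => by push_cast; ring_nf)
  have hg_nonneg : ∀ n, 0 ≤ g n := fun n => by
    have : (0 : ℝ) < ((n : ℝ) + 1) ^ (-b) := Real.rpow_pos_of_pos (hpos n) _
    positivity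
  have hg_le_h : ∀ n, g n ≤ ((n : ℝ) + 1) ^ (-b) := fun n => by
    have h1 : (0 : ℝ) ≤ ((n : ℝ) + 1) ^ (-b) := Real.rpow_nonneg (hpos n).le _
    simpa [hg] using mul_le_of_le_one_right h1 (hexple n)
  have hsum_g : Summable g := hsum_h.of_nonneg_of_le hg_nonneg hg_le_h
  have hf_le_g : ∀ n, |f n| ≤ g n := by
    intro n
    have hpb : (0 : ℝ) < ((n : ℝ) + 1) ^ b := Real.rpow_pos_of_pos (hpos n) b
    have hmu : |((moebius (n + 1) : ℤ) : ℝ)| ≤ 1 := by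
      have := abs_moebius_le_one (n := n + 1)
      exact_mod_cast (by exact_mod_cast this : |((moebius (n+1) : ℤ) : ℝ)| ≤ (1:ℝ))
    have hexp0 : (0 : ℝ) < Real.exp (-x / ((n : ℝ) + 1) ^ a) := Real.exp_pos _
    simp only [hf, hg]
    rw [abs_mul, abs_div, abs_of_pos hpb, abs_of_pos hexp0,
      Real.rpow_neg (hpos n).le]
    apply mul_le_mul_of_nonneg_right _ hexp0.le
    rw [div_eq_mul_inv]
    exact mul_le_of_le_one_left (by positivity) hmu
  have hsum_f : Summable f :=
    Summable.of_abs (hsum_g.of_nonneg_of_le (fun n => abs_nonneg _) hf_le_g)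
  -- head bound
  have hhead : ∑ n ∈ Finset.range N, g n ≤ C₁ * x ^ ((1 - b) / a) := by
    have hterm : ∀ n ∈ Finset.range N,
        g n ≤ (k.factorial : ℝ) * 2 ^ (a * k - b) * x ^ (-(b / a)) := by
      intro n hn
      have hnN : (n : ℝ) + 1 ≤ (N : ℝ) := by
        have : n + 1 ≤ N := Finset.mem_range.mp hn
        exact_mod_cast this
      exact head_term_le a b x ((n : ℝ) + 1) ha hx (by linarith [hpos n])
        (hnN.trans hNle) k hk
    calc ∑ n ∈ Finset.range N, g n
        ≤ ∑ n ∈ Finset.range N, (k.factorial : ℝ) * 2 ^ (a * k - b) * x ^ (-(b / a)) :=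
          Finset.sum_le_sum hterm
      _ = (N : ℝ) * ((k.factorial : ℝ) * 2 ^ (a * k - b) * x ^ (-(b / a))) := by
          rw [Finset.sum_const, Finset.card_range, nsmul_eq_mul]
      _ ≤ (2 * x ^ a⁻¹) * ((k.factorial : ℝ) * 2 ^ (a * k - b) * x ^ (-(b / a))) := by
          apply mul_le_mul_of_nonneg_right hNle
          positivity
      _ = C₁ * (x ^ a⁻¹ * x ^ (-(b / a))) := by rw [hC₁]; ring
      _ = C₁ * x ^ ((1 - b) / a) := by
          rw [← Real.rpow_add hx0,
            show a⁻¹ + -(b / a) = (1 - b) / a by field_simp; ring]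
  -- tail bound
  have htail : ∑' n : ℕ, g (n + N) ≤ (1 / (b - 1)) * x ^ ((1 - b) / a) := by
    have hgt : ∀ n : ℕ, g (n + N) ≤ ((N : ℝ) + n + 1) ^ (-b) := by
      intro n
      have := hg_le_h (n + N)
      calc g (n + N) ≤ (((n + N : ℕ) : ℝ) + 1) ^ (-b) := this
        _ = ((N : ℝ) + n + 1) ^ (-b) := by push_cast; ring_nf
    have hsum_shift : Summable (fun n : ℕ => g (n + N)) :=
      (summable_nat_add_iff N).mpr hsum_g
    have hsum_tail : Summable (fun n : ℕ => ((N : ℝ) + n + 1) ^ (-b)) := by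
      have h1 := Real.summable_nat_rpow.mpr (show -b < -1 by linarith)
      have h2 := (summable_nat_add_iff (N + 1)).mpr h1
      exact h2.congr (fun n => by push_cast; ring_nf)
    calc ∑' n : ℕ, g (n + N) ≤ ∑' n : ℕ, ((N : ℝ) + n + 1) ^ (-b) :=
          Summable.tsum_le_tsum hgt hsum_shift hsum_tail
      _ ≤ (N : ℝ) ^ (1 - b) / (b - 1) := tail_sum_le b hb N hN1
      _ ≤ (x ^ a⁻¹) ^ (1 - b) / (b - 1) := by
          exact (div_le_div_iff_of_pos_right (show (0:ℝ) < b - 1 by linarith)).mpr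
            (Real.rpow_le_rpow_of_nonpos hxa0 hNge (by linarith))
      _ = (1 / (b - 1)) * x ^ ((1 - b) / a) := by
          rw [← Real.rpow_mul hx0.le]
          rw [show a⁻¹ * (1 - b) = (1 - b) / a by field_simp]
          ring
  -- assemble
  have hgsum : ∑' n, g n ≤ (C₁ + 1 / (b - 1)) * x ^ ((1 - b) / a) := by
    rw [← Summable.sum_add_tsum_nat_add N hsum_g]
    calc ∑ n ∈ Finset.range N, g n + ∑' n : ℕ, g (n + N)
        ≤ C₁ * x ^ ((1 - b) / a) + (1 / (b - 1)) * x ^ ((1 - b) / a) := by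
          exact add_le_add hhead htail
      _ = (C₁ + 1 / (b - 1)) * x ^ ((1 - b) / a) := by ring
  have habs : |∑' n, f n| ≤ ∑' n, g n := by
    have h1 : |∑' n, f n| ≤ ∑' n, |f n| := by
      have := norm_tsum_le_tsum_norm (f := f)
        (hsum_f.abs.congr fun n => (Real.norm_eq_abs (f n)).symm)
      simpa [Real.norm_eq_abs] using this
    exact h1.trans (Summable.tsum_le_tsum hf_le_g hsum_f.abs hsum_g)
  have key : |Rab a b x| ≤ (C₁ + 1 / (b - 1)) * (x * x ^ ((1 - b) / a)) := by
    have hR : Rab a b x = x * ∑' n, f n := rfl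
    rw [hR, abs_mul, abs_of_pos hx0]
    calc x * |∑' n, f n| ≤ x * ((C₁ + 1 / (b - 1)) * x ^ ((1 - b) / a)) :=
          mul_le_mul_of_nonneg_left (habs.trans hgsum) hx0.le
      _ = (C₁ + 1 / (b - 1)) * (x * x ^ ((1 - b) / a)) := by ring
  calc |Rab a b x| ≤ (C₁ + 1 / (b - 1)) * (x * x ^ ((1 - b) / a)) := key
    _ = (C₁ + 1 / (b - 1)) * x ^ ((1 + a - b) / a) := by
        rw [show x * x ^ ((1 - b) / a) = x ^ (1 : ℝ) * x ^ ((1 - b) / a) by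
            rw [Real.rpow_one],
          ← Real.rpow_add hx0]
        rw [show (1:ℝ) + (1 - b) / a = (1 + a - b) / a by field_simp; ring]
end

section
/- For all real numbers b > 1 and a > 0, the sequence c_{ab}(k) = ∑_{n=1}^∞ (μ(n)/n^b)(1 - 1/n^a)^k satisfies c_{ab}(k) = O(k^{(1-b)/a}) as k → ∞, i.e., there exists a constant C such that |c_{ab}(k)| ≤ C k^{(1-b)/a} for all sufficiently large natural numbers k. -/
open ArithmeticFunction

/-- The generalized Báez-Duarte sequence
`c_{ab}(k) = ∑_{n=1}^∞ (μ(n)/n^b)(1 - 1/n^a)^k`. -/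
noncomputable def cab (a b : ℝ) (k : ℕ) : ℝ :=
  ∑' n : ℕ,
    ((moebius (n + 1) : ℤ) : ℝ) / ((n : ℝ) + 1) ^ b * (1 - 1 / ((n : ℝ) + 1) ^ a) ^ k

/-! Since `|μ| ≤ 1`, `|c_{ab}(k)|` is at most `∑ n^{-b} (1 - n^{-a})^k`; split this sum at
`N = ⌈k^{1/a}⌉`. For `n ≤ N`, `(1 - n^{-a})^k ≤ exp(-k/n^a) ≤ m! (n^a/k)^m` with `am ≥ b`, so each
of the `N` head terms is `O(N^{-b})`. The tail `∑_{n>N} n^{-b}` is at most `N^{1-b}/(b-1)` by the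
integral test. Both parts are therefore `O(N^{1-b}) = O(k^{(1-b)/a})`. -/

open Real Finset
open scoped Nat

noncomputable def cabMajorant (a b : ℝ) (k : ℕ) (x : ℝ) : ℝ := (1 - 1 / x ^ a) ^ k / x ^ b

lemma one_sub_one_div_rpow_nonneg {a x : ℝ} (ha : 0 ≤ a) (hx : 1 ≤ x) : 0 ≤ 1 - 1 / x ^ a :=
  sub_nonneg.2 <| div_le_one_of_le₀ (one_le_rpow hx ha) (by positivity)

lemma one_sub_one_div_rpow_le_one {a x : ℝ} (hx : 0 ≤ x) : 1 - 1 / x ^ a ≤ 1 :=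
  sub_le_self _ (by positivity)

lemma one_sub_pow_le_exp_neg_mul {t : ℝ} (ht : t ≤ 1) (k : ℕ) : (1 - t) ^ k ≤ exp (-(k * t)) := by
  rw [← mul_neg, exp_nat_mul]
  exact pow_le_pow_left₀ (sub_nonneg.2 ht) (one_sub_le_exp_neg t) k

lemma exp_neg_le_factorial_div_pow {y : ℝ} (hy : 0 < y) (m : ℕ) : exp (-y) ≤ m ! / y ^ m := by
  rw [exp_neg, inv_le_comm₀ (exp_pos y) (by positivity), inv_div]
  exact pow_div_factorial_le_exp _ hy.le m

lemma tsum_rpow_neg_nat_add_le {b : ℝ} (hb : 1 < b) {N : ℕ} (hN : 0 < N) :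
    ∑' n : ℕ, ((n + N + 1 : ℕ) : ℝ) ^ (-b) ≤ (N : ℝ) ^ (1 - b) / (b - 1) := by
  have hN' : (0 : ℝ) < N := by exact_mod_cast hN
  have hanti : AntitoneOn (fun t : ℝ ↦ t ^ (-b)) (Set.Ici (N : ℝ)) := fun s hs t _ hst ↦
    rpow_le_rpow_of_nonpos (hN'.trans_le hs) hst (by linarith)
  calc ∑' n : ℕ, ((n + N + 1 : ℕ) : ℝ) ^ (-b)
      ≤ ∫ t in Set.Ioi (N : ℝ), t ^ (-b) :=
        hanti.tsum_comp_add_le_integral N (integrableOn_Ioi_rpow_of_lt (by linarith) hN')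
          fun t ht ↦ (rpow_pos_of_pos (hN'.trans ht) _).le
    _ = (N : ℝ) ^ (1 - b) / (b - 1) := by
        rw [integral_Ioi_rpow_of_lt (by linarith) hN', neg_div, ← div_neg]
        ring_nf

section Majorant

variable {a b : ℝ} {k : ℕ}

lemma cabMajorant_nonneg (ha : 0 ≤ a) {x : ℝ} (hx : 1 ≤ x) : 0 ≤ cabMajorant a b k x :=
  div_nonneg (pow_nonneg (one_sub_one_div_rpow_nonneg ha hx) k) (by positivity)

lemma cabMajorant_le_rpow_neg (ha : 0 ≤ a) {x : ℝ} (hx : 1 ≤ x) :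
    cabMajorant a b k x ≤ x ^ (-b) := by
  have hx0 : 0 < x := zero_lt_one.trans_le hx
  rw [cabMajorant, rpow_neg hx0.le, ← one_div]
  gcongr
  exact pow_le_one₀ (one_sub_one_div_rpow_nonneg ha hx) (one_sub_one_div_rpow_le_one hx0.le)

lemma abs_cab_term_le (ha : 0 ≤ a) (n : ℕ) :
    |((moebius (n + 1) : ℤ) : ℝ) / ((n : ℝ) + 1) ^ b * (1 - 1 / ((n : ℝ) + 1) ^ a) ^ k|
      ≤ cabMajorant a b k ((n : ℝ) + 1) := by
  have hmaj := cabMajorant_nonneg (b := b) (k := k) ha (le_add_of_nonneg_left n.cast_nonneg)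
  rw [div_mul_eq_mul_div, mul_div_assoc, abs_mul, ← cabMajorant, abs_of_nonneg hmaj]
  exact mul_le_of_le_one_left hmaj (mod_cast abs_moebius_le_one)

lemma summable_cabMajorant (ha : 0 ≤ a) (hb : 1 < b) :
    Summable fun n : ℕ ↦ cabMajorant a b k ((n : ℝ) + 1) := by
  have hx (n : ℕ) : 1 ≤ (n : ℝ) + 1 := le_add_of_nonneg_left n.cast_nonneg
  refine .of_nonneg_of_le (fun n ↦ cabMajorant_nonneg ha (hx n))
    (fun n ↦ cabMajorant_le_rpow_neg ha (hx n)) ?_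
  exact_mod_cast (summable_nat_add_iff 1).2 (summable_nat_rpow.2 (neg_lt_neg hb))

lemma cabMajorant_le_factorial_mul (ha : 0 ≤ a) {x : ℝ} (hx : 1 ≤ x) (hk : 0 < k) (m : ℕ) :
    cabMajorant a b k x ≤ m ! * x ^ (a * m - b) / k ^ m := by
  have hx0 : 0 < x := zero_lt_one.trans_le hx
  have hxa : 0 < x ^ a := rpow_pos_of_pos hx0 a
  have hy : 0 < k / x ^ a := div_pos (by exact_mod_cast hk) hxa
  calc cabMajorant a b k x ≤ exp (-(k * (1 / x ^ a))) / x ^ b := by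
        refine div_le_div_of_nonneg_right ?_ (rpow_nonneg hx0.le b)
        exact one_sub_pow_le_exp_neg_mul (div_le_one_of_le₀ (one_le_rpow hx ha) hxa.le) k
    _ ≤ m ! / (k / x ^ a) ^ m / x ^ b := by
        rw [mul_one_div]
        exact div_le_div_of_nonneg_right (exp_neg_le_factorial_div_pow hy m) (by positivity)
    _ = m ! * x ^ (a * m - b) / k ^ m := by
        rw [rpow_sub hx0, rpow_mul hx0.le, rpow_natCast, div_pow]
        field_simp

lemma abs_cab_le_tsum_cabMajorant (ha : 0 ≤ a) (hb : 1 < b) :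
    |cab a b k| ≤ ∑' n : ℕ, cabMajorant a b k ((n : ℝ) + 1) := by
  rw [cab, ← norm_eq_abs]
  exact tsum_of_norm_bounded (summable_cabMajorant ha hb).hasSum (abs_cab_term_le ha)

lemma cabMajorant_le_rpow_neg_of_le (ha : 0 < a) {m : ℕ} (hbm : b ≤ a * m) {x N : ℝ} (hx : 1 ≤ x)
    (hxN : x ≤ N) (hNk : (N / 2) ^ a ≤ k) : cabMajorant a b k x ≤ m ! * 2 ^ (a * m) * N ^ (-b) := by
  have hN : 0 < N := by linarith
  have hNk' : 0 < (N / 2) ^ a := by positivity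
  have hk : 0 < k := by exact_mod_cast hNk'.trans_le hNk
  calc cabMajorant a b k x ≤ m ! * x ^ (a * m - b) / k ^ m :=
        cabMajorant_le_factorial_mul ha.le hx hk m
    _ ≤ m ! * N ^ (a * m - b) / ((N / 2) ^ a) ^ m := by
        gcongr
    _ = m ! * 2 ^ (a * m) * N ^ (-b) := by
        rw [← rpow_natCast, ← rpow_mul (by positivity), div_rpow hN.le zero_le_two, rpow_sub hN,
          rpow_neg hN.le]
        field_simp

lemma sum_range_cabMajorant_le (ha : 0 < a) {m : ℕ} (hbm : b ≤ a * m) {N : ℕ} (hN : 0 < N)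
    (hNk : ((N : ℝ) / 2) ^ a ≤ k) :
    ∑ n ∈ range N, cabMajorant a b k ((n : ℝ) + 1) ≤ m ! * 2 ^ (a * m) * (N : ℝ) ^ (1 - b) := by
  have hN' : (0 : ℝ) < N := by exact_mod_cast hN
  have hterm (n : ℕ) (hn : n ∈ range N) :
      cabMajorant a b k ((n : ℝ) + 1) ≤ m ! * 2 ^ (a * m) * (N : ℝ) ^ (-b) :=
    cabMajorant_le_rpow_neg_of_le ha hbm (le_add_of_nonneg_left n.cast_nonneg)
      (by exact_mod_cast mem_range.1 hn) hNk
  refine (sum_le_card_nsmul _ _ _ hterm).trans_eq ?_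
  rw [card_range, nsmul_eq_mul, sub_eq_add_neg, rpow_add hN', rpow_one]
  ring

lemma tsum_cabMajorant_nat_add_le (ha : 0 ≤ a) (hb : 1 < b) {N : ℕ} (hN : 0 < N) :
    ∑' n : ℕ, cabMajorant a b k (((n + N : ℕ) : ℝ) + 1) ≤ (N : ℝ) ^ (1 - b) / (b - 1) := by
  have hle (n : ℕ) : cabMajorant a b k (((n + N : ℕ) : ℝ) + 1) ≤ ((n + N + 1 : ℕ) : ℝ) ^ (-b) := by
    exact_mod_cast cabMajorant_le_rpow_neg ha (le_add_of_nonneg_left (n + N).cast_nonneg)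
  have hsum : Summable fun n : ℕ ↦ ((n + N + 1 : ℕ) : ℝ) ^ (-b) :=
    (summable_nat_add_iff (N + 1)).2 (summable_nat_rpow.2 (neg_lt_neg hb))
  have hnonneg (n : ℕ) : 0 ≤ cabMajorant a b k (((n + N : ℕ) : ℝ) + 1) :=
    cabMajorant_nonneg ha (le_add_of_nonneg_left (n + N).cast_nonneg)
  exact (Summable.tsum_le_tsum hle (hsum.of_nonneg_of_le hnonneg hle) hsum).trans
    (tsum_rpow_neg_nat_add_le hb hN)

lemma tsum_cabMajorant_le (ha : 0 < a) (hb : 1 < b) {m : ℕ} (hbm : b ≤ a * m) {N : ℕ} (hN : 0 < N)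
    (hNk : ((N : ℝ) / 2) ^ a ≤ k) :
    ∑' n : ℕ, cabMajorant a b k ((n : ℝ) + 1)
      ≤ (m ! * 2 ^ (a * m) + 1 / (b - 1)) * (N : ℝ) ^ (1 - b) := by
  rw [← (summable_cabMajorant ha.le hb).sum_add_tsum_nat_add N, add_mul, one_div_mul_eq_div]
  exact add_le_add (sum_range_cabMajorant_le ha hbm hN hNk)
    (tsum_cabMajorant_nat_add_le ha.le hb hN)

end Majorant

lemma div_two_rpow_le_of_ceil_rpow_inv {a y : ℝ} (ha : 0 < a) (hy : 1 ≤ y) :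
    ((⌈y ^ (1 / a)⌉₊ : ℝ) / 2) ^ a ≤ y := by
  have hroot : 1 ≤ y ^ (1 / a) := one_le_rpow hy (by positivity)
  have hceil : (⌈y ^ (1 / a)⌉₊ : ℝ) / 2 ≤ y ^ (1 / a) := by
    linarith [Nat.ceil_le_two_mul (by linarith : (2 : ℝ)⁻¹ ≤ y ^ (1 / a))]
  calc ((⌈y ^ (1 / a)⌉₊ : ℝ) / 2) ^ a ≤ (y ^ (1 / a)) ^ a :=
        rpow_le_rpow (by positivity) hceil ha.le
    _ = y := by rw [← rpow_mul (by linarith), one_div_mul_cancel ha.ne', rpow_one]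

theorem stmt7 (a b : ℝ) (ha : 0 < a) (hb : 1 < b) :
    ∃ C : ℝ, ∃ k₁ : ℕ, ∀ k : ℕ, k₁ ≤ k → |cab a b k| ≤ C * (k : ℝ) ^ ((1 - b) / a) := by
  obtain ⟨m, hbm⟩ : ∃ m : ℕ, b ≤ a * m := ⟨⌈b / a⌉₊, (div_le_iff₀' ha).1 (Nat.le_ceil _)⟩
  refine ⟨m ! * 2 ^ (a * m) + 1 / (b - 1), 1, fun k hk ↦ ?_⟩
  have hk : (1 : ℝ) ≤ k := by exact_mod_cast hk
  set N := ⌈(k : ℝ) ^ (1 / a)⌉₊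
  have hkN : (k : ℝ) ^ (1 / a) ≤ N := Nat.le_ceil _
  have hroot : 0 < (k : ℝ) ^ (1 / a) := by positivity
  have hN : 0 < N := by exact_mod_cast hroot.trans_le hkN
  have hNb : (N : ℝ) ^ (1 - b) ≤ (k : ℝ) ^ ((1 - b) / a) := by
    calc (N : ℝ) ^ (1 - b) ≤ ((k : ℝ) ^ (1 / a)) ^ (1 - b) :=
          rpow_le_rpow_of_nonpos hroot hkN (by linarith)
      _ = (k : ℝ) ^ ((1 - b) / a) := by rw [← rpow_mul (by linarith), one_div_mul_eq_div]
  calc |cab a b k| ≤ ∑' n : ℕ, cabMajorant a b k ((n : ℝ) + 1) :=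
        abs_cab_le_tsum_cabMajorant ha.le hb
    _ ≤ (m ! * 2 ^ (a * m) + 1 / (b - 1)) * (N : ℝ) ^ (1 - b) :=
        tsum_cabMajorant_le ha hb hbm hN (div_two_rpow_le_of_ceil_rpow_inv ha hk)
    _ ≤ (m ! * 2 ^ (a * m) + 1 / (b - 1)) * (k : ℝ) ^ ((1 - b) / a) := by
        have : 0 < b - 1 := by linarith
        gcongr
end

section
/- For every natural number k and every real number x with 0 ≤ x ≤ 1, one has 0 ≤ exp(-kx) - (1-x)^k ≤ (k/2)(x² + x³) exp(-kx). -/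
lemma pow_sub_pow_le_aux (a b c : ℝ) (hb : 0 ≤ b) (hba : b ≤ a) (hc : 0 ≤ c)
    (h : a - b ≤ c * a) : ∀ k : ℕ, a ^ k - b ^ k ≤ (k : ℝ) * c * a ^ k := by
  intro k
  induction k with
  | zero => simp
  | succ n ih =>
    have ha : 0 ≤ a := hb.trans hba
    have hbn : b ^ n ≤ a ^ n := pow_le_pow_left₀ hb hba n
    have : a ^ (n + 1) - b ^ (n + 1) = a * (a ^ n - b ^ n) + b ^ n * (a - b) := by ring
    rw [this]
    have h1 : a * (a ^ n - b ^ n) ≤ a * ((n : ℝ) * c * a ^ n) :=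
      mul_le_mul_of_nonneg_left ih ha
    have h2 : b ^ n * (a - b) ≤ a ^ n * (c * a) :=
      mul_le_mul hbn h (by linarith) (pow_nonneg ha n)
    push_cast
    have h3 := add_le_add h1 h2
    have h4 : a * ((n:ℝ) * c * a ^ n) + a ^ n * (c * a) = ((n:ℝ) + 1) * c * a ^ (n+1) := by
      ring
    linarith

lemma cubic_le_exp {x : ℝ} (hx : 0 ≤ x) : 1 + x + x ^ 2 / 2 + x ^ 3 / 6 ≤ Real.exp x := by
  have := Real.sum_le_exp_of_nonneg hx 4
  rw [Finset.sum_range_succ, Finset.sum_range_succ, Finset.sum_range_succ,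
    Finset.sum_range_one] at this
  norm_num [Nat.factorial] at this
  linarith

theorem stmt9 (k : ℕ) (x : ℝ) (hx0 : 0 ≤ x) (hx1 : x ≤ 1) :
    0 ≤ Real.exp (-(k : ℝ) * x) - (1 - x) ^ k ∧
    Real.exp (-(k : ℝ) * x) - (1 - x) ^ k ≤
      ((k : ℝ) / 2) * (x ^ 2 + x ^ 3) * Real.exp (-(k : ℝ) * x) := by
  have hb : (0:ℝ) ≤ 1 - x := by linarith
  have hba : 1 - x ≤ Real.exp (-x) := by
    have := Real.add_one_le_exp (-x); linarith
  have hexp : Real.exp (-(k : ℝ) * x) = Real.exp (-x) ^ k := by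
    rw [← Real.exp_nat_mul]; ring_nf
  have hc : (0:ℝ) ≤ (x ^ 2 + x ^ 3) / 2 := by positivity
  have hkey : Real.exp (-x) - (1 - x) ≤ (x ^ 2 + x ^ 3) / 2 * Real.exp (-x) := by
    have hE := cubic_le_exp hx0
    have hEE : Real.exp (-x) * Real.exp x = 1 := by
      rw [← Real.exp_add]; simp
    have hprod : (1 - x) * Real.exp x ≥ 1 - (x ^ 2 + x ^ 3) / 2 := by
      have h1 : (1 - x) * (1 + x + x ^ 2 / 2 + x ^ 3 / 6) ≤ (1 - x) * Real.exp x :=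
        mul_le_mul_of_nonneg_left hE hb
      nlinarith [mul_nonneg (pow_nonneg hx0 3) (by linarith : (0:ℝ) ≤ 1 - x)]
    have hEpos := Real.exp_pos x
    have hnegpos := Real.exp_pos (-x)
    nlinarith [mul_le_mul_of_nonneg_left hprod hnegpos.le]
  have main := pow_sub_pow_le_aux (Real.exp (-x)) (1 - x) ((x ^ 2 + x ^ 3) / 2) hb hba hc hkey k
  constructor
  · rw [hexp]
    have := pow_le_pow_left₀ hb hba k
    linarith
  · rw [hexp]
    calc Real.exp (-x) ^ k - (1 - x) ^ k ≤ (k : ℝ) * ((x ^ 2 + x ^ 3) / 2) * Real.exp (-x) ^ k := main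
    _ = ((k : ℝ) / 2) * (x ^ 2 + x ^ 3) * Real.exp (-x) ^ k := by ring
end

section
/- For all real numbers a > 0 and b > 1 and every natural number k ≥ 1, one has |R_{ab}(k)/k - c_{ab}(k)| ≤ (k/2) ∑_{n=1}^∞ n^{-(2a+b)} exp(-k/n^a) + (k/2) ∑_{n=1}^∞ n^{-(3a+b)} exp(-k/n^a). -/
/-!
With `t = n^{-a} ∈ (0, 1]` the `n`-th terms of `R_{ab}(k)/k` and `c_{ab}(k)` are
`μ(n) n^{-b} e^{-kt}` and `μ(n) n^{-b} (1 - t)^k`. The elementary estimate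
`0 ≤ e^{-kt} - (1 - t)^k ≤ (k/2)(t² + t³) e^{-kt}` for `t ∈ [0, 1]` then bounds the difference
termwise, and `|μ(n)| ≤ 1` together with `t² n^{-b} = n^{-(2a+b)}`, `t³ n^{-b} = n^{-(3a+b)}`
gives the two series on the right.
-/

open ArithmeticFunction

namespace Real

lemma exp_neg_mul_one_sub_le_one_sub {t : ℝ} (ht₀ : 0 ≤ t) (ht₁ : t ≤ 1) :
    exp (-t) * (1 - (t ^ 2 + t ^ 3) / 2) ≤ 1 - t := by
  rw [exp_neg, inv_mul_le_iff₀ (exp_pos t)]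
  -- compare with the degree-4 Taylor polynomial of `exp t`
  have htaylor := sum_le_exp_of_nonneg ht₀ 5
  simp only [Finset.sum_range_succ, Finset.sum_range_zero, Nat.factorial] at htaylor
  norm_num at htaylor
  have hmul : (1 - t) * (1 + t + t ^ 2 / 2 + t ^ 3 / 6 + t ^ 4 / 24) ≤ (1 - t) * exp t :=
    mul_le_mul_of_nonneg_left (by linarith) (by linarith)
  have hrem : 0 ≤ t ^ 3 * (1 - t) * (t + 4) := by
    have : 0 ≤ 1 - t := by linarith
    positivity
  nlinarith

lemma one_sub_pow_le_exp_neg_mul {t : ℝ} (ht₁ : t ≤ 1) (k : ℕ) :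
    (1 - t) ^ k ≤ exp (-(k * t)) := by
  rw [← mul_neg, exp_nat_mul]
  exact pow_le_pow_left₀ (by linarith) (one_sub_le_exp_neg t) k

lemma exp_neg_mul_mul_le_one_sub_pow {t : ℝ} (ht₀ : 0 ≤ t) (ht₁ : t ≤ 1) (k : ℕ) :
    exp (-(k * t)) * (1 - k * ((t ^ 2 + t ^ 3) / 2)) ≤ (1 - t) ^ k := by
  have hs₁ : (t ^ 2 + t ^ 3) / 2 ≤ 1 := by
    have := pow_le_one₀ ht₀ ht₁ (n := 2)
    have := pow_le_one₀ ht₀ ht₁ (n := 3)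
    linarith
  set s := (t ^ 2 + t ^ 3) / 2
  have hbernoulli : 1 - k * s ≤ (1 - s) ^ k := by
    simpa [sub_eq_add_neg] using one_add_mul_le_pow (a := -s) (by linarith) k
  calc exp (-(k * t)) * (1 - k * s) ≤ exp (-t) ^ k * (1 - s) ^ k := by
        rw [← mul_neg, exp_nat_mul]; exact mul_le_mul_of_nonneg_left hbernoulli (by positivity)
    _ = (exp (-t) * (1 - s)) ^ k := (mul_pow _ _ _).symm
    _ ≤ (1 - t) ^ k :=
        pow_le_pow_left₀ (mul_nonneg (exp_nonneg _) (sub_nonneg.2 hs₁))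
          (exp_neg_mul_one_sub_le_one_sub ht₀ ht₁) k

lemma abs_exp_neg_mul_sub_one_sub_pow_le {t : ℝ} (ht₀ : 0 ≤ t) (ht₁ : t ≤ 1) (k : ℕ) :
    |exp (-(k * t)) - (1 - t) ^ k| ≤ k / 2 * (t ^ 2 + t ^ 3) * exp (-(k * t)) := by
  rw [abs_of_nonneg (sub_nonneg.2 (one_sub_pow_le_exp_neg_mul ht₁ k))]
  linarith [exp_neg_mul_mul_le_one_sub_pow ht₀ ht₁ k]

end Real

lemma abs_moebius_cast_le_one (n : ℕ) : |((moebius n : ℤ) : ℝ)| ≤ 1 := by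
  exact_mod_cast abs_moebius_le_one

lemma abs_div_succ_rpow_mul_le {c y : ℝ} (hc : |c| ≤ 1) (hy : |y| ≤ 1) (n : ℕ) (p : ℝ) :
    |c / ((n : ℝ) + 1) ^ p * y| ≤ 1 / ((n : ℝ) + 1) ^ p := by
  have hpos : 0 < ((n : ℝ) + 1) ^ p := by positivity
  rw [abs_mul, abs_div, abs_of_pos hpos]
  calc |c| / ((n : ℝ) + 1) ^ p * |y| ≤ 1 / ((n : ℝ) + 1) ^ p * 1 := by gcongr
    _ = 1 / ((n : ℝ) + 1) ^ p := mul_one _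

lemma summable_div_succ_rpow_mul {p : ℝ} (hp : 1 < p) {c y : ℕ → ℝ} (hc : ∀ n, |c n| ≤ 1)
    (hy : ∀ n, |y n| ≤ 1) : Summable fun n : ℕ => c n / ((n : ℝ) + 1) ^ p * y n := by
  have hsum : Summable fun n : ℕ => 1 / ((n : ℝ) + 1) ^ p := by
    simpa using (summable_nat_add_iff 1).2 (Real.summable_one_div_nat_rpow.2 hp)
  exact hsum.of_norm_bounded fun n => abs_div_succ_rpow_mul_le (hc n) (hy n) n p

lemma one_div_rpow_pow_mul_one_div_rpow {x : ℝ} (hx : 0 < x) (a b : ℝ) (m : ℕ) :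
    (1 / x ^ a) ^ m * (1 / x ^ b) = 1 / x ^ (m * a + b) := by
  rw [div_pow, one_pow, div_mul_div_comm, one_mul, ← Real.rpow_natCast (x ^ a) m,
    ← Real.rpow_mul hx.le, ← Real.rpow_add hx, mul_comm a]

lemma abs_tsum_sub_tsum_le {f g h : ℕ → ℝ} (hf : Summable f) (hg : Summable g)
    (hh : Summable h) (hfgh : ∀ n, |f n - g n| ≤ h n) :
    |∑' n, f n - ∑' n, g n| ≤ ∑' n, h n := by
  rw [← hf.tsum_sub hg]
  exact (norm_tsum_le_tsum_norm (hf.sub hg).norm).trans ((hf.sub hg).norm.tsum_le_tsum hfgh hh)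

section Terms

variable {a : ℝ} (b : ℝ) (k : ℕ) (n : ℕ)

lemma one_div_succ_rpow_mem_Icc (ha : 0 < a) :
    1 / ((n : ℝ) + 1) ^ a ∈ Set.Icc 0 1 := by
  have hone : 1 ≤ ((n : ℝ) + 1) ^ a :=
    Real.one_le_rpow (le_add_of_nonneg_left n.cast_nonneg) ha.le
  exact ⟨by positivity, (div_le_one (by linarith)).2 hone⟩

lemma abs_moebius_term_sub_le (ha : 0 < a) :
    |((moebius (n + 1) : ℤ) : ℝ) / ((n : ℝ) + 1) ^ b * Real.exp (-(k : ℝ) / ((n : ℝ) + 1) ^ a)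
        - ((moebius (n + 1) : ℤ) : ℝ) / ((n : ℝ) + 1) ^ b * (1 - 1 / ((n : ℝ) + 1) ^ a) ^ k|
      ≤ (k : ℝ) / 2 *
          (1 / ((n : ℝ) + 1) ^ (2 * a + b) * Real.exp (-(k : ℝ) / ((n : ℝ) + 1) ^ a))
        + (k : ℝ) / 2 *
          (1 / ((n : ℝ) + 1) ^ (3 * a + b) * Real.exp (-(k : ℝ) / ((n : ℝ) + 1) ^ a)) := by
  have hpos : 0 < (n : ℝ) + 1 := by positivity
  have h₂ := one_div_rpow_pow_mul_one_div_rpow hpos a b 2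
  have h₃ := one_div_rpow_pow_mul_one_div_rpow hpos a b 3
  push_cast at h₂ h₃
  set t := 1 / ((n : ℝ) + 1) ^ a
  obtain ⟨ht₀, ht₁⟩ := one_div_succ_rpow_mem_Icc n ha
  have hexp : -(k : ℝ) / ((n : ℝ) + 1) ^ a = -(k * t) := by rw [mul_one_div, neg_div]
  have hμ : |((moebius (n + 1) : ℤ) : ℝ) / ((n : ℝ) + 1) ^ b| ≤ 1 / ((n : ℝ) + 1) ^ b := by
    simpa using abs_div_succ_rpow_mul_le (y := 1)
      (abs_moebius_cast_le_one (n + 1)) (by simp) n b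
  rw [hexp, ← mul_sub, abs_mul, ← h₂, ← h₃]
  calc _ ≤ 1 / ((n : ℝ) + 1) ^ b * (k / 2 * (t ^ 2 + t ^ 3) * Real.exp (-(k * t))) :=
        mul_le_mul hμ (Real.abs_exp_neg_mul_sub_one_sub_pow_le ht₀ ht₁ k) (abs_nonneg _)
          (by positivity)
    _ = _ := by ring

lemma abs_exp_neg_div_succ_rpow_le_one (a : ℝ) :
    |Real.exp (-(k : ℝ) / ((n : ℝ) + 1) ^ a)| ≤ 1 := by
  rw [Real.abs_exp, Real.exp_le_one_iff, neg_div, neg_nonpos]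
  positivity

lemma abs_one_sub_one_div_succ_rpow_pow_le_one (ha : 0 < a) :
    |(1 - 1 / ((n : ℝ) + 1) ^ a) ^ k| ≤ 1 := by
  obtain ⟨ht₀, ht₁⟩ := one_div_succ_rpow_mem_Icc n ha
  rw [abs_pow]
  exact pow_le_one₀ (abs_nonneg _) (abs_le.2 ⟨by linarith, by linarith⟩)

end Terms

theorem stmt10 (a b : ℝ) (ha : 0 < a) (hb : 1 < b) (k : ℕ) (hk : 1 ≤ k) :
    |Rab a b k / k - cab a b k| ≤
      ((k : ℝ) / 2) *
          ∑' n : ℕ, 1 / ((n : ℝ) + 1) ^ (2 * a + b) * Real.exp (-(k : ℝ) / ((n : ℝ) + 1) ^ a)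
        + ((k : ℝ) / 2) *
          ∑' n : ℕ, 1 / ((n : ℝ) + 1) ^ (3 * a + b) * Real.exp (-(k : ℝ) / ((n : ℝ) + 1) ^ a) := by
  have hk₀ : (k : ℝ) ≠ 0 := (Nat.cast_pos.2 hk).ne'
  have hμ (n : ℕ) := abs_moebius_cast_le_one (n + 1)
  have hsum (p : ℝ) (hp : 1 < p) := summable_div_succ_rpow_mul (c := fun _ => 1) hp
    (fun _ => by simp) (abs_exp_neg_div_succ_rpow_le_one k · a)
  have h₁ := (hsum (2 * a + b) (by linarith)).mul_left ((k : ℝ) / 2)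
  have h₂ := (hsum (3 * a + b) (by linarith)).mul_left ((k : ℝ) / 2)
  rw [Rab, mul_div_cancel_left₀ _ hk₀, cab, ← tsum_mul_left, ← tsum_mul_left, ← h₁.tsum_add h₂]
  exact abs_tsum_sub_tsum_le
    (summable_div_succ_rpow_mul hb hμ (abs_exp_neg_div_succ_rpow_le_one k · a))
    (summable_div_succ_rpow_mul hb hμ (abs_one_sub_one_div_succ_rpow_pow_le_one k · ha))
    (h₁.add h₂) (abs_moebius_term_sub_le b k · ha)
end

section
/- For all real numbers a > 0 and b > 1, one has R_{ab}(k)/k = c_{ab}(k) + O(k^{(1-a-b)/a}) as k → ∞; i.e., there exists a constant C such that |R_{ab}(k)/k - c_{ab}(k)| ≤ C k^{(1-a-b)/a} for all sufficiently large natural numbers k. -/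
open ArithmeticFunction

/-!
Writing `x = n^(-a)`, the `n`-th terms of `R_{ab}(k)/k` and `c_{ab}(k)` differ by
`(μ(n)/n^b) (e^(-kx) - (1 - x)^k)`, and `|e^(-kx) - (1 - x)^k| ≤ k x² e^(-(k-1)x)`.
Split the sum of these majorants at `N ≈ k^(1/a)`. For `n < N` the bound
`e^(-t) ≤ M!/t^M` with `aM ≥ b + 2a` leaves terms `≲ k^(1-M) n^(aM-b-2a)`, summing to
`≲ k^(1-M) N^(aM-b-2a+1)`; for `n ≥ N` the terms are `≤ k n^(-(b+2a))`, with tail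
`≲ k N^(1-b-2a)`. Both are of order `k^((1-a-b)/a)`.
-/

open Real

lemma abs_exp_neg_mul_sub_one_sub_pow_le {x : ℝ} (hx0 : 0 ≤ x) (hx1 : x ≤ 1) (k : ℕ) :
    |exp (-(k * x)) - (1 - x) ^ k| ≤ k * x ^ 2 * exp (-((k - 1) * x)) := by
  rcases k with _ | k
  · simp
  have h1x : 1 - x ≤ exp (-x) := by linarith [add_one_le_exp (-x)]
  have hexp : |exp (-x) - (1 - x)| ≤ x ^ 2 := by
    simpa [sub_add] using abs_exp_sub_one_sub_id_le (x := -x) (by rwa [abs_neg, abs_of_nonneg hx0])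
  calc |exp (-((k + 1 : ℕ) * x)) - (1 - x) ^ (k + 1)|
      = |exp (-x) ^ (k + 1) - (1 - x) ^ (k + 1)| := by rw [← exp_nat_mul]; ring_nf
    _ ≤ |exp (-x) - (1 - x)| * (k + 1 : ℕ) * max |exp (-x)| |1 - x| ^ k := abs_pow_sub_pow_le ..
    _ = |exp (-x) - (1 - x)| * (k + 1 : ℕ) * exp (-(k * x)) := by
      rw [abs_of_pos (exp_pos _), abs_of_nonneg (show 0 ≤ 1 - x by linarith), max_eq_left h1x,
        ← exp_nat_mul]
      ring_nf
    _ ≤ x ^ 2 * (k + 1 : ℕ) * exp (-(k * x)) := by gcongr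
    _ = (k + 1 : ℕ) * x ^ 2 * exp (-(((k + 1 : ℕ) - 1) * x)) := by push_cast; ring_nf

lemma exp_neg_le_factorial_div_pow_s11 {t : ℝ} (ht : 0 < t) (M : ℕ) :
    exp (-t) ≤ M.factorial / t ^ M := by
  rw [exp_neg, inv_le_comm₀ (exp_pos t) (by positivity), inv_div]
  exact pow_div_factorial_le_exp t ht.le M

lemma summable_nat_add_one_rpow_neg {s : ℝ} (hs : 1 < s) :
    Summable fun n : ℕ => ((n : ℝ) + 1) ^ (-s) := by
  simpa using (summable_nat_add_iff 1).mpr (summable_nat_rpow.mpr (by linarith : -s < -1))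

lemma sum_range_rpow_le {q : ℝ} (hq : 0 ≤ q) (N : ℕ) :
    ∑ n ∈ Finset.range N, ((n : ℝ) + 1) ^ q ≤ (N : ℝ) ^ (q + 1) := by
  calc ∑ n ∈ Finset.range N, ((n : ℝ) + 1) ^ q ≤ ∑ _n ∈ Finset.range N, (N : ℝ) ^ q := by
        gcongr with n hn
        exact_mod_cast Finset.mem_range.mp hn
    _ = (N : ℝ) ^ (q + 1) := by
        rw [Finset.sum_const, Finset.card_range, nsmul_eq_mul, rpow_add_one' (by positivity)
          (by linarith)]
        ring

lemma tsum_nat_add_rpow_neg_le {s : ℝ} (hs : 1 < s) {N : ℕ} (hN : 0 < N) :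
    ∑' n : ℕ, (((n + N : ℕ) : ℝ) + 1) ^ (-s) ≤ (N : ℝ) ^ (1 - s) / (s - 1) := by
  have hN' : (0 : ℝ) < N := by exact_mod_cast hN
  refine Real.tsum_le_of_sum_range_le (fun n => by positivity) fun m => ?_
  have hanti : AntitoneOn (fun t : ℝ => t ^ (-s)) (Set.Icc (N : ℝ) (N + m)) :=
    fun x hx y _ hxy => rpow_le_rpow_of_nonpos (hN'.trans_le hx.1) hxy (by linarith)
  calc ∑ n ∈ Finset.range m, (((n + N : ℕ) : ℝ) + 1) ^ (-s)
      = ∑ n ∈ Finset.range m, ((N : ℝ) + ↑(n + 1)) ^ (-s) :=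
        Finset.sum_congr rfl fun n _ => by push_cast; ring_nf
    _ ≤ ∫ t in (N : ℝ)..N + m, t ^ (-s) := hanti.sum_le_integral
    _ = ((N + m : ℝ) ^ (1 - s) - (N : ℝ) ^ (1 - s)) / (1 - s) := by
        rw [integral_rpow (Or.inr ⟨by linarith, ?_⟩)]
        · ring_nf
        · rw [Set.uIcc_of_le (by linarith)]
          exact fun h => hN'.not_ge h.1
    _ ≤ (N : ℝ) ^ (1 - s) / (s - 1) := by
        rw [← neg_div_neg_eq, neg_sub, neg_sub]
        gcongr
        exact sub_le_self _ (by positivity)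

lemma tsum_le_of_le_head_of_le_tail {f : ℕ → ℝ} (hf : Summable f) {N : ℕ} (hN : 0 < N)
    {q s A B : ℝ} (hq : 0 ≤ q) (hs : 1 < s) (hA : 0 ≤ A) (hB : 0 ≤ B)
    (head : ∀ n < N, f n ≤ A * ((n : ℝ) + 1) ^ q) (tail : ∀ n, f n ≤ B * ((n : ℝ) + 1) ^ (-s)) :
    ∑' n, f n ≤ A * (N : ℝ) ^ (q + 1) + B * ((N : ℝ) ^ (1 - s) / (s - 1)) := by
  rw [← hf.sum_add_tsum_nat_add N]
  gcongr
  · calc ∑ n ∈ Finset.range N, f n ≤ ∑ n ∈ Finset.range N, A * ((n : ℝ) + 1) ^ q :=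
          Finset.sum_le_sum fun n hn => head n (Finset.mem_range.mp hn)
      _ ≤ A * (N : ℝ) ^ (q + 1) := by rw [← Finset.mul_sum]; gcongr; exact sum_range_rpow_le hq N
  · have hsum : Summable fun n : ℕ => (((n + N : ℕ) : ℝ) + 1) ^ (-s) :=
      (summable_nat_add_iff N).mpr (summable_nat_add_one_rpow_neg hs)
    calc ∑' n, f (n + N) ≤ ∑' n : ℕ, B * (((n + N : ℕ) : ℝ) + 1) ^ (-s) :=
          ((summable_nat_add_iff N).mpr hf).tsum_le_tsum (fun n => tail _) (hsum.mul_left B)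
      _ ≤ B * ((N : ℝ) ^ (1 - s) / (s - 1)) := by
          rw [tsum_mul_left]; gcongr; exact tsum_nat_add_rpow_neg_le hs hN

/-- With `x = y^(-a)` this is `y^(-b) · k x² e^(-(k-1)x)`; at `y = n` it dominates the `n`-th
term of `R_{ab}(k)/k - c_{ab}(k)`. -/
noncomputable def errorMajorant (a b k y : ℝ) : ℝ :=
  k * y ^ (-(b + 2 * a)) * exp (-((k - 1) * y ^ (-a)))

lemma errorMajorant_nonneg {a b k y : ℝ} (hk : 0 ≤ k) (hy : 0 ≤ y) :
    0 ≤ errorMajorant a b k y := by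
  unfold errorMajorant; positivity

lemma errorMajorant_le {a b k y : ℝ} (hk : 1 ≤ k) (hy : 0 ≤ y) :
    errorMajorant a b k y ≤ k * y ^ (-(b + 2 * a)) := by
  refine mul_le_of_le_one_right (by positivity) (exp_le_one_iff.mpr ?_)
  exact neg_nonpos.mpr (mul_nonneg (by linarith) (by positivity))

lemma summable_errorMajorant {a b k : ℝ} (ha : 0 ≤ a) (hb : 1 < b) (hk : 1 ≤ k) :
    Summable fun n : ℕ => errorMajorant a b k ((n : ℝ) + 1) :=
  ((summable_nat_add_one_rpow_neg (s := b + 2 * a) (by linarith)).mul_left k).of_nonneg_of_le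
    (fun n => errorMajorant_nonneg (by linarith) (by positivity))
    fun n => errorMajorant_le hk (by positivity)

lemma errorMajorant_le_factorial {a b k y : ℝ} (hk : 2 ≤ k) (hy : 0 < y) (M : ℕ) :
    errorMajorant a b k y ≤
      M.factorial * 2 ^ M * k ^ (1 - (M : ℝ)) * y ^ (a * M - (b + 2 * a)) := by
  have hk0 : 0 < k := by linarith
  have hkM : (k / 2) ^ M ≤ (k - 1) ^ M := by gcongr; linarith
  unfold errorMajorant
  calc k * y ^ (-(b + 2 * a)) * exp (-((k - 1) * y ^ (-a)))
      ≤ k * y ^ (-(b + 2 * a)) * (M.factorial / ((k - 1) * y ^ (-a)) ^ M) := by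
        gcongr; exact exp_neg_le_factorial_div_pow_s11 (mul_pos (by linarith) (by positivity)) M
    _ = M.factorial * k / (k - 1) ^ M * (y ^ (-(b + 2 * a)) / (y ^ (-a)) ^ M) := by
        rw [mul_pow]; field_simp
    _ ≤ M.factorial * k / (k / 2) ^ M * (y ^ (-(b + 2 * a)) / (y ^ (-a)) ^ M) := by
        gcongr
    _ = _ := by
        rw [← rpow_natCast (y ^ (-a)), ← rpow_mul hy.le, ← rpow_sub hy, rpow_sub hk0, rpow_one,
          rpow_natCast, div_pow]
        field_simp
        ring_nf

lemma abs_moebius_div_rpow_le (b : ℝ) (n : ℕ) :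
    |((moebius (n + 1) : ℤ) : ℝ) / ((n : ℝ) + 1) ^ b| ≤ ((n : ℝ) + 1) ^ (-b) := by
  have hy : (0 : ℝ) < (n : ℝ) + 1 := n.cast_add_one_pos
  rw [abs_div, abs_of_pos (rpow_pos_of_pos hy b), rpow_neg hy.le, div_eq_mul_inv]
  exact mul_le_of_le_one_left (by positivity) (by exact_mod_cast abs_moebius_le_one)

lemma summable_moebius_div_rpow_mul {b : ℝ} (hb : 1 < b) {t : ℕ → ℝ} (ht : ∀ n, |t n| ≤ 1) :
    Summable fun n : ℕ => ((moebius (n + 1) : ℤ) : ℝ) / ((n : ℝ) + 1) ^ b * t n := by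
  refine (summable_nat_add_one_rpow_neg hb).of_norm_bounded fun n => ?_
  rw [norm_mul, ← mul_one (((n : ℝ) + 1) ^ (-b))]
  exact mul_le_mul (abs_moebius_div_rpow_le b n) (ht n) (norm_nonneg _) (by positivity)

lemma abs_Rab_div_sub_cab_le {a b : ℝ} (ha : 0 ≤ a) (hb : 1 < b) {k : ℕ} (hk : k ≠ 0) :
    |Rab a b k / k - cab a b k| ≤ ∑' n : ℕ, errorMajorant a b k ((n : ℝ) + 1) := by
  set w : ℕ → ℝ := fun n => ((moebius (n + 1) : ℤ) : ℝ) / ((n : ℝ) + 1) ^ b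
  have hx : ∀ n : ℕ, 1 / ((n : ℝ) + 1) ^ a = ((n : ℝ) + 1) ^ (-a) := fun n => by
    rw [rpow_neg (by positivity), one_div]
  have hx0 : ∀ n : ℕ, 0 ≤ ((n : ℝ) + 1) ^ (-a) := fun n => by positivity
  have hx1 : ∀ n : ℕ, ((n : ℝ) + 1) ^ (-a) ≤ 1 := fun n =>
    rpow_le_one_of_one_le_of_nonpos (by linarith [n.cast_nonneg (α := ℝ)]) (by linarith)
  have hF : Summable fun n => w n * exp (-(k : ℝ) / ((n : ℝ) + 1) ^ a) :=
    summable_moebius_div_rpow_mul hb fun n => by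
      rw [abs_of_pos (exp_pos _), exp_le_one_iff]
      exact div_nonpos_of_nonpos_of_nonneg (by simp) (by positivity)
  have hG : Summable fun n => w n * (1 - 1 / ((n : ℝ) + 1) ^ a) ^ k :=
    summable_moebius_div_rpow_mul hb fun n => by
      rw [abs_pow, hx]
      exact pow_le_one₀ (abs_nonneg _) (abs_le.mpr ⟨by linarith [hx1 n], by linarith [hx0 n]⟩)
  have hdiff : ∀ n : ℕ, |w n * exp (-(k : ℝ) / ((n : ℝ) + 1) ^ a) -
      w n * (1 - 1 / ((n : ℝ) + 1) ^ a) ^ k| ≤ errorMajorant a b k ((n : ℝ) + 1) := fun n => by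
    rw [← mul_sub, abs_mul, neg_div, div_eq_mul_one_div, hx]
    calc _ ≤ ((n : ℝ) + 1) ^ (-b) *
          (k * (((n : ℝ) + 1) ^ (-a)) ^ 2 * exp (-((k - 1) * ((n : ℝ) + 1) ^ (-a)))) :=
          mul_le_mul (abs_moebius_div_rpow_le b n)
            (abs_exp_neg_mul_sub_one_sub_pow_le (hx0 n) (hx1 n) k) (abs_nonneg _) (by positivity)
      _ = errorMajorant a b k ((n : ℝ) + 1) := by
        have hy : (0 : ℝ) < (n : ℝ) + 1 := n.cast_add_one_pos
        rw [errorMajorant, neg_add, rpow_add hy, show -(2 * a) = -a * (2 : ℕ) by push_cast; ring,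
          rpow_mul hy.le, rpow_natCast]
        ring
  have hE := summable_errorMajorant (k := k) ha hb (by exact_mod_cast Nat.one_le_iff_ne_zero.mpr hk)
  rw [Rab, mul_div_cancel_left₀ _ (by exact_mod_cast hk), cab, ← hF.tsum_sub hG]
  calc _ ≤ ∑' n, |w n * exp (-(k : ℝ) / ((n : ℝ) + 1) ^ a) -
          w n * (1 - 1 / ((n : ℝ) + 1) ^ a) ^ k| :=
        norm_tsum_le_tsum_norm ((hF.sub hG).norm)
    _ ≤ _ := (hF.sub hG).abs.tsum_le_tsum hdiff hE

lemma exists_tsum_errorMajorant_le {a b : ℝ} (ha : 0 < a) (hb : 1 < b) :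
    ∃ C, ∀ k : ℝ, 2 ≤ k →
      ∑' n : ℕ, errorMajorant a b k ((n : ℝ) + 1) ≤ C * k ^ ((1 - a - b) / a) := by
  set s := b + 2 * a
  have hs : 1 < s := by linarith
  set M := ⌈s / a⌉₊
  set q := a * M - s
  have hq : 0 ≤ q := by
    have := Nat.le_ceil (s / a)
    rw [div_le_iff₀ ha] at this
    linarith
  refine ⟨M.factorial * 2 ^ M * 2 ^ (q + 1) + 1 / (s - 1), fun k hk => ?_⟩
  have hk0 : 0 < k := by linarith
  set z := k ^ (1 / a)
  have hz : 1 ≤ z := one_le_rpow (by linarith) (by positivity)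
  set N := ⌈z⌉₊
  have hzN : z ≤ N := Nat.le_ceil z
  have hNz : (N : ℝ) ≤ 2 * z := by linarith [Nat.ceil_lt_add_one (by linarith : 0 ≤ z)]
  have hN : 0 < N := Nat.ceil_pos.mpr (by linarith)
  have hhead : k ^ (1 - (M : ℝ)) * z ^ (q + 1) = k ^ ((1 - a - b) / a) := by
    rw [← rpow_mul hk0.le, ← rpow_add hk0]
    congr 1
    field_simp
    ring
  have htail : k * z ^ (1 - s) = k ^ ((1 - a - b) / a) := by
    rw [← rpow_mul hk0.le]
    nth_rw 1 [← rpow_one k]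
    rw [← rpow_add hk0]
    congr 1
    field_simp
    ring
  calc ∑' n : ℕ, errorMajorant a b k ((n : ℝ) + 1)
      ≤ M.factorial * 2 ^ M * k ^ (1 - (M : ℝ)) * (N : ℝ) ^ (q + 1)
        + k * ((N : ℝ) ^ (1 - s) / (s - 1)) :=
        tsum_le_of_le_head_of_le_tail (summable_errorMajorant ha.le hb (by linarith)) hN hq hs
          (by positivity) hk0.le
          (fun n _ => errorMajorant_le_factorial hk n.cast_add_one_pos M)
          fun n => errorMajorant_le (by linarith) (by positivity)
    _ ≤ M.factorial * 2 ^ M * k ^ (1 - (M : ℝ)) * (2 * z) ^ (q + 1)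
        + k * (z ^ (1 - s) / (s - 1)) := by
        gcongr ?_ + k * (?_ / _)
        · gcongr
        · exact rpow_le_rpow_of_nonpos (zero_lt_one.trans_le hz) hzN (by linarith)
    _ = (M.factorial * 2 ^ M * 2 ^ (q + 1) + 1 / (s - 1)) * k ^ ((1 - a - b) / a) := by
        rw [mul_rpow zero_le_two (by linarith)]
        linear_combination (M.factorial * 2 ^ M * 2 ^ (q + 1) : ℝ) * hhead + 1 / (s - 1) * htail

theorem stmt11 (a b : ℝ) (ha : 0 < a) (hb : 1 < b) :
    ∃ C : ℝ, ∃ k₁ : ℕ, ∀ k : ℕ, k₁ ≤ k →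
      |Rab a b k / k - cab a b k| ≤ C * (k : ℝ) ^ ((1 - a - b) / a) := by
  obtain ⟨C, hC⟩ := exists_tsum_errorMajorant_le ha hb
  refine ⟨C, 2, fun k hk => ?_⟩
  calc |Rab a b k / k - cab a b k| ≤ ∑' n : ℕ, errorMajorant a b k ((n : ℝ) + 1) :=
        abs_Rab_div_sub_cab_le ha.le hb (by omega)
    _ ≤ C * (k : ℝ) ^ ((1 - a - b) / a) := hC k (by exact_mod_cast hk)
end

section
/- For all real numbers x, y with 0 < x < y, one has |R(x)/x - R(y)/y| ≤ (y-x)·((√π/4) x^{-3/2} + (4/e²) x^{-2}). In particular, there exists a real constant A such that |R(x)/x - R(y)/y| ≤ A (y-x) x^{-3/2} for all 0 < x < y. -/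
/-!
Expanding `1 / ζ(2k+2) = ∑ μ(n) n^(-2k-2)` and summing over `k` first turns the Riesz series
into `R(x) / x = ∑ μ(n) n⁻² exp (-x / n²)`. Since `0 ≤ e^(-a) - e^(-b) ≤ (b - a) e^(-a)` for
`a ≤ b` and `|μ(n)| ≤ 1`, the difference in question is at most `(y - x) ∑ w(x, n)` with
`w(x, t) = t⁻⁴ exp (-x / t²)`.

As a function of `t ≥ 0`, `w(x, ·)` increases up to `√(x / 2)` and decreases afterwards, so
its sum over `n ∈ ℕ` is at most its integral over `(0, ∞)` plus its maximum. The substitution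
`t = 1 / s` makes the integral `∫ s² exp (-x s²) ds = Γ(3/2) x^(-3/2) / 2 = (√π / 4) x^(-3/2)`,
and writing `w(x, t) = u² e^(-u) / x²` with `u = x / t²` gives the maximum `4 e⁻² x⁻²`.
For the uniform constant, `x < 1` is handled by the cruder bound `w(x, n) ≤ n⁻⁴`.
-/

open Real Set MeasureTheory ArithmeticFunction
open scoped ArithmeticFunction.Moebius LSeries.notation

lemma riemannZeta_ofReal_eq_zetaR {s : ℝ} (hs : 1 < s) : riemannZeta s = zetaR s := by
  have him := (Complex.pos_iff.1 (riemannZeta_pos_of_one_lt hs)).2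
  exact Complex.ext (by simp [zetaR]) (by simp [him])

lemma inv_zetaR_eq_tsum_moebius_div_pow {m : ℕ} (hm : 1 < m) :
    (zetaR m)⁻¹ = ∑' n : ℕ, (μ n : ℝ) / (n : ℝ) ^ m := by
  have hre : 1 < (m : ℂ).re := by simpa using hm
  have hL : LSeries (↗μ) m = (riemannZeta m)⁻¹ := by
    rw [← LSeries_one_eq_riemannZeta hre]
    exact (inv_eq_of_mul_eq_one_right (LSeries_one_mul_Lseries_moebius hre)).symm
  have hterm : ∀ n, LSeries.term (↗μ) m n = (((μ n : ℝ) / (n : ℝ) ^ m : ℝ) : ℂ) := by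
    intro n
    rcases eq_or_ne n 0 with rfl | hn
    · simp
    · rw [LSeries.term_of_ne_zero hn, Complex.cpow_natCast]
      push_cast
      rfl
  rw [← Complex.ofReal_inj, Complex.ofReal_tsum, Complex.ofReal_inv, ← riemannZeta_ofReal_eq_zetaR
    (by exact_mod_cast hm), Complex.ofReal_natCast, ← hL, LSeries]
  exact tsum_congr hterm

lemma abs_moebius_div_pow_le {m : ℕ} (hm : 2 ≤ m) (n : ℕ) :
    |(μ n : ℝ) / (n : ℝ) ^ m| ≤ ((n : ℝ) ^ 2)⁻¹ := by
  rcases eq_or_ne n 0 with rfl | hn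
  · simp
  have hn1 : (1 : ℝ) ≤ n := by exact_mod_cast Nat.one_le_iff_ne_zero.2 hn
  have hnm : (0 : ℝ) < (n : ℝ) ^ m := pow_pos (by linarith) m
  have hμ : |(μ n : ℝ)| ≤ 1 := by exact_mod_cast abs_moebius_le_one
  calc |(μ n : ℝ) / (n : ℝ) ^ m| = |(μ n : ℝ)| / (n : ℝ) ^ m := by
        rw [abs_div, abs_of_pos hnm]
    _ ≤ 1 / (n : ℝ) ^ 2 := div_le_div₀ zero_le_one hμ (by positivity) (pow_le_pow_right₀ hn1 hm)
    _ = ((n : ℝ) ^ 2)⁻¹ := one_div _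

lemma exp_eq_tsum_pow_div_factorial (y : ℝ) : exp y = ∑' k : ℕ, y ^ k / k.factorial := by
  rw [Real.exp_eq_exp_ℝ, NormedSpace.exp_eq_tsum_div]

lemma tsum_rieszCoeff_eq_tsum_moebius_mul_exp (x : ℝ) :
    ∑' k : ℕ, (-1 : ℝ) ^ k * x ^ k / (k.factorial * zetaR (2 * k + 2))
      = ∑' n : ℕ, (μ n : ℝ) / (n : ℝ) ^ 2 * exp (-x / (n : ℝ) ^ 2) := by
  set F : ℕ → ℕ → ℝ := fun k n => (μ n : ℝ) / (n : ℝ) ^ 2 * ((-x / (n : ℝ) ^ 2) ^ k / k.factorial)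
  have hrow (k : ℕ) :
      ∑' n, F k n = (-1 : ℝ) ^ k * x ^ k / (k.factorial * zetaR (2 * k + 2)) := by
    have hF (n : ℕ) : F k n = (-x) ^ k / k.factorial * ((μ n : ℝ) / (n : ℝ) ^ (2 * k + 2)) := by
      simp only [F]
      ring
    have hζ := inv_zetaR_eq_tsum_moebius_div_pow (m := 2 * k + 2) (by omega)
    push_cast at hζ
    rw [tsum_congr hF, tsum_mul_left, ← hζ, neg_pow]
    ring
  have hcol (n : ℕ) : ∑' k, F k n = (μ n : ℝ) / (n : ℝ) ^ 2 * exp (-x / (n : ℝ) ^ 2) := by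
    rw [tsum_mul_left, exp_eq_tsum_pow_div_factorial]
  have hbound (p : ℕ × ℕ) :
      ‖Function.uncurry F p‖ ≤ |x| ^ p.1 / p.1.factorial * ((p.2 : ℝ) ^ 2)⁻¹ := by
    obtain ⟨k, n⟩ := p
    rcases eq_or_ne n 0 with rfl | hn
    · simp [F]
    have hn1 : (1 : ℝ) ≤ n := by exact_mod_cast Nat.one_le_iff_ne_zero.2 hn
    have hn2 : (0 : ℝ) < (n : ℝ) ^ 2 := by positivity
    have hx : |-x / (n : ℝ) ^ 2| ≤ |x| := by
      rw [abs_div, abs_neg, abs_of_pos hn2]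
      exact div_le_self (abs_nonneg x) (one_le_pow₀ hn1)
    calc |(μ n : ℝ) / (n : ℝ) ^ 2 * ((-x / (n : ℝ) ^ 2) ^ k / k.factorial)|
        = |-x / (n : ℝ) ^ 2| ^ k / k.factorial * |(μ n : ℝ) / (n : ℝ) ^ 2| := by
          rw [abs_mul, mul_comm, abs_div, abs_pow, Nat.abs_cast]
      _ ≤ |x| ^ k / k.factorial * ((n : ℝ) ^ 2)⁻¹ := by
          gcongr
          exact abs_moebius_div_pow_le le_rfl n
  have hsum : Summable (Function.uncurry F) :=
    .of_norm_bounded ((Real.summable_pow_div_factorial |x|).mul_of_nonneg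
      (Real.summable_nat_pow_inv.2 one_lt_two) (fun _ => by positivity) (fun _ => by positivity))
      hbound
  calc _ = ∑' k, ∑' n, F k n := (tsum_congr hrow).symm
    _ = ∑' n, ∑' k, F k n := hsum.tsum_comm.symm
    _ = _ := tsum_congr hcol

lemma rieszR_div_self {x : ℝ} (hx : x ≠ 0) :
    RieszR x / x = ∑' n : ℕ, (μ n : ℝ) / (n : ℝ) ^ 2 * exp (-x / (n : ℝ) ^ 2) := by
  rw [RieszR, mul_div_cancel_left₀ _ hx, tsum_rieszCoeff_eq_tsum_moebius_mul_exp]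

/-- `h` says that `v` lies between `u` and `2`, the peak of `u ↦ u² e^(-u)`. -/
lemma sq_mul_exp_neg_le {u v : ℝ} (hu : 0 ≤ u) (hv : 0 < v) (h : (u - v) * (2 - v) ≤ 0) :
    u ^ 2 * exp (-u) ≤ v ^ 2 * exp (-v) := by
  have hratio : u / v ≤ exp (u / v - 1) := by linarith [add_one_le_exp (u / v - 1)]
  have hexponent : 2 * (u / v - 1) ≤ u - v := by
    have : 2 * (u / v - 1) - (u - v) = (u - v) * (2 - v) / v := by field_simp
    linarith [div_nonpos_of_nonpos_of_nonneg h hv.le]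
  have hsq : (u / v) ^ 2 ≤ exp (u - v) :=
    calc (u / v) ^ 2 ≤ exp (u / v - 1) ^ 2 := by gcongr
      _ = exp (2 * (u / v - 1)) := by rw [sq, ← exp_add]; ring_nf
      _ ≤ exp (u - v) := exp_le_exp.2 hexponent
  calc u ^ 2 * exp (-u) = v ^ 2 * ((u / v) ^ 2 * exp (-u)) := by field_simp
    _ ≤ v ^ 2 * (exp (u - v) * exp (-u)) := by gcongr
    _ = v ^ 2 * exp (-v) := by rw [← exp_add]; ring_nf

noncomputable def rieszWeight (x t : ℝ) : ℝ := (t ^ 4)⁻¹ * exp (-x / t ^ 2)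

lemma rieszWeight_nonneg (x t : ℝ) : 0 ≤ rieszWeight x t := by
  unfold rieszWeight
  positivity

lemma rieszWeight_zero_right (x : ℝ) : rieszWeight x 0 = 0 := by
  simp [rieszWeight]

lemma exp_neg_div_sq_le_one {x : ℝ} (hx : 0 ≤ x) (t : ℝ) : exp (-x / t ^ 2) ≤ 1 :=
  exp_le_one_iff.2 (div_nonpos_of_nonpos_of_nonneg (neg_nonpos.2 hx) (sq_nonneg t))

lemma rieszWeight_le_inv_pow_four {x : ℝ} (hx : 0 ≤ x) (t : ℝ) : rieszWeight x t ≤ (t ^ 4)⁻¹ :=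
  mul_le_of_le_one_right (by positivity) (exp_neg_div_sq_le_one hx t)

lemma rieszWeight_eq {x t : ℝ} (hx : x ≠ 0) (ht : t ≠ 0) :
    rieszWeight x t = (x / t ^ 2) ^ 2 * exp (-(x / t ^ 2)) / x ^ 2 := by
  rw [rieszWeight, neg_div]
  field_simp

lemma rieszWeight_le {x : ℝ} (hx : 0 < x) (t : ℝ) : rieszWeight x t ≤ 4 / exp 2 / x ^ 2 := by
  rcases eq_or_ne t 0 with rfl | ht
  · rw [rieszWeight_zero_right]
    positivity
  have hmax := sq_mul_exp_neg_le (u := x / t ^ 2) (v := 2) (by positivity) two_pos (by simp)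
  rw [rieszWeight_eq hx.ne' ht]
  gcongr
  exact hmax.trans_eq (by rw [exp_neg]; ring)

lemma monotoneOn_rieszWeight {x : ℝ} (hx : 0 < x) :
    MonotoneOn (rieszWeight x) (Icc 0 √(x / 2)) := by
  rintro s ⟨hs, -⟩ t ⟨-, htc⟩ hst
  rcases hs.eq_or_lt with rfl | hs
  · rw [rieszWeight_zero_right]
    exact rieszWeight_nonneg x t
  have ht : 0 < t := hs.trans_le hst
  have hpeak : 2 ≤ x / t ^ 2 := by
    rw [le_div_iff₀ (by positivity)]
    linarith [(Real.le_sqrt ht.le (by positivity)).1 htc]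
  rw [rieszWeight_eq hx.ne' hs.ne', rieszWeight_eq hx.ne' ht.ne']
  gcongr ?_ / _
  refine sq_mul_exp_neg_le (by positivity) (by positivity)
    (mul_nonpos_of_nonneg_of_nonpos (sub_nonneg.2 ?_) (by linarith))
  gcongr

lemma antitoneOn_rieszWeight {x : ℝ} (hx : 0 < x) :
    AntitoneOn (rieszWeight x) (Ici √(x / 2)) := by
  intro s hsc t _ hst
  have hs : 0 < s := (Real.sqrt_pos.2 (by positivity)).trans_le hsc
  have ht : 0 < t := hs.trans_le hst
  have hpeak : x / s ^ 2 ≤ 2 := by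
    rw [div_le_iff₀ (by positivity)]
    linarith [(Real.sqrt_le_left hs.le).1 hsc]
  rw [rieszWeight_eq hx.ne' hs.ne', rieszWeight_eq hx.ne' ht.ne']
  gcongr ?_ / _
  refine sq_mul_exp_neg_le (by positivity) (by positivity)
    (mul_nonpos_of_nonpos_of_nonneg (sub_nonpos.2 ?_) (by linarith))
  gcongr

lemma rieszWeight_eq_comp_inv (x : ℝ) {t : ℝ} (ht : 0 < t) :
    rieszWeight x t = (|(-1 : ℝ)| * t ^ ((-1 : ℝ) - 1)) •
      ((t ^ (-1 : ℝ)) ^ (2 : ℝ) * exp (-x * (t ^ (-1 : ℝ)) ^ (2 : ℝ))) := by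
  have h2 : t ^ ((-1 : ℝ) - 1) = (t ^ 2)⁻¹ := by
    rw [show (-1 : ℝ) - 1 = -(2 : ℕ) by norm_num, rpow_neg ht.le, rpow_natCast]
  rw [h2, rpow_neg_one, rpow_two, rieszWeight, smul_eq_mul]
  field_simp
  ring_nf

lemma integrableOn_rieszWeight {x : ℝ} (hx : 0 < x) : IntegrableOn (rieszWeight x) (Ioi 0) :=
  ((integrableOn_Ioi_comp_rpow_iff _ (by norm_num)).2
    (integrableOn_rpow_mul_exp_neg_mul_rpow (by norm_num) two_pos hx)).congr_fun
    (fun _ ht => (rieszWeight_eq_comp_inv x ht).symm) measurableSet_Ioi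

lemma integral_rieszWeight {x : ℝ} (hx : 0 < x) :
    ∫ t in Ioi 0, rieszWeight x t = √π / 4 * x ^ (-(3 : ℝ) / 2) := by
  rw [setIntegral_congr_fun measurableSet_Ioi (fun _ ht => rieszWeight_eq_comp_inv x ht),
    integral_comp_rpow_Ioi (fun s => s ^ (2 : ℝ) * exp (-x * s ^ (2 : ℝ))) (by norm_num),
    integral_rpow_mul_exp_neg_mul_rpow two_pos (by norm_num) hx,
    show ((2 : ℝ) + 1) / 2 = 1 / 2 + 1 by norm_num, Gamma_add_one (by norm_num), Gamma_one_half_eq]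
  ring_nf

lemma min_le_intervalIntegral_of_unimodal {f : ℝ → ℝ} {a c : ℝ} (hac : a ≤ c) (hca : c ≤ a + 1)
    (hmono : MonotoneOn f (Icc a c)) (hanti : AntitoneOn f (Icc c (a + 1)))
    (hint : IntervalIntegrable f volume a (a + 1)) :
    min (f a) (f (a + 1)) ≤ ∫ t in a..a + 1, f t := by
  calc min (f a) (f (a + 1)) = ∫ _ in a..a + 1, min (f a) (f (a + 1)) := by simp
    _ ≤ ∫ t in a..a + 1, f t := by
      refine intervalIntegral.integral_mono_on (by linarith) intervalIntegrable_const hint ?_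
      rintro t ⟨hat, hta⟩
      rcases le_total t c with htc | hct
      · exact (min_le_left _ _).trans (hmono ⟨le_rfl, hac⟩ ⟨hat, htc⟩ hat)
      · exact (min_le_right _ _).trans (hanti ⟨hct, hta⟩ ⟨hca, le_rfl⟩ hta)

lemma intervalIntegral_zero_le_setIntegral_Ioi {f : ℝ → ℝ} {b : ℝ} (hb : 0 ≤ b)
    (hf : ∀ t, 0 ≤ t → 0 ≤ f t) (hint : IntegrableOn f (Ioi 0)) :
    ∫ t in (0 : ℝ)..b, f t ≤ ∫ t in Ioi 0, f t := by
  rw [intervalIntegral.integral_of_le hb]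
  exact setIntegral_mono_set hint
    ((ae_restrict_iff' measurableSet_Ioi).2 (ae_of_all _ fun t ht => hf t (le_of_lt ht)))
    Ioc_subset_Ioi_self.eventuallyLE

/-- Split at `K = ⌊c⌋`: each `f i` with `i < K` is at most the integral over `[i, i + 1]`, each
`f i` with `i ≥ K + 2` at most the integral over `[i - 1, i]`, and
`f K + f (K + 1) = min + max ≤ ∫_K^(K+1) f + M`. -/
theorem tsum_nat_le_integral_add_of_unimodal {f : ℝ → ℝ} {c M : ℝ} (hc : 0 ≤ c)
    (hf : ∀ t, 0 ≤ t → 0 ≤ f t) (hM : ∀ t, 0 ≤ t → f t ≤ M)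
    (hmono : MonotoneOn f (Icc 0 c)) (hanti : AntitoneOn f (Ici c))
    (hint : IntegrableOn f (Ioi 0)) :
    ∑' n : ℕ, f n ≤ (∫ t in Ioi 0, f t) + M := by
  set K := ⌊c⌋₊
  have hKc : (K : ℝ) ≤ c := Nat.floor_le hc
  have hcK : c ≤ K + 1 := (Nat.lt_floor_add_one c).le
  have hK : (0 : ℝ) ≤ K := K.cast_nonneg
  have hII {a b : ℝ} (ha : 0 ≤ a) (hab : a ≤ b) : IntervalIntegrable f volume a b :=
    (intervalIntegrable_iff_integrableOn_Ioc_of_le hab).2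
      (hint.mono_set fun _ ht => ha.trans_lt ht.1)
  have hleft : ∑ i ∈ Finset.range K, f i ≤ ∫ t in (0 : ℝ)..K, f t := by
    simpa using MonotoneOn.sum_le_integral_Ico (Nat.zero_le K)
      (by simpa using hmono.mono (Icc_subset_Icc_right hKc))
  have hmid : f K + f (K + 1) ≤ M + ∫ t in (K : ℝ)..K + 1, f t := by
    have := min_le_intervalIntegral_of_unimodal hKc hcK (hmono.mono (Icc_subset_Icc_left hK))
      (hanti.mono Icc_subset_Ici_self) (hII hK (by linarith))
    linarith [min_add_max (f K) (f (K + 1)), max_le (hM K hK) (hM (K + 1) (by linarith))]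
  have hright (N : ℕ) :
      ∑ i ∈ Finset.range N, f (K + 1 + (i + 1 : ℕ)) ≤ ∫ t in (K + 1 : ℝ)..K + 1 + N, f t :=
    AntitoneOn.sum_le_integral (hanti.mono fun _ ht => hcK.trans ht.1)
  refine Real.tsum_le_of_sum_range_le (fun n => hf n n.cast_nonneg) fun N => ?_
  calc ∑ i ∈ Finset.range N, f i ≤ ∑ i ∈ Finset.range (K + 2 + N), f i :=
        Finset.sum_le_sum_of_subset_of_nonneg (Finset.range_subset_range.2 (by omega))
          fun i _ _ => hf i i.cast_nonneg
    _ = ∑ i ∈ Finset.range K, f i + (f K + f (K + 1))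
          + ∑ i ∈ Finset.range N, f (K + 1 + (i + 1 : ℕ)) := by
        rw [Finset.sum_range_add, Finset.sum_range_succ, Finset.sum_range_succ]
        push_cast
        ring_nf
    _ ≤ (∫ t in (0 : ℝ)..K, f t) + (M + ∫ t in (K : ℝ)..K + 1, f t)
          + ∫ t in (K + 1 : ℝ)..K + 1 + N, f t :=
        add_le_add (add_le_add hleft hmid) (hright N)
    _ = (∫ t in (0 : ℝ)..K + 1 + N, f t) + M := by
        have h₁ := hII le_rfl hK
        have h₂ := hII hK (b := K + 1) (by linarith)
        have h₃ := hII (a := K + 1) (b := K + 1 + N) (by linarith) (by linarith)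
        rw [← intervalIntegral.integral_add_adjacent_intervals (h₁.trans h₂) h₃,
          ← intervalIntegral.integral_add_adjacent_intervals h₁ h₂]
        ring
    _ ≤ (∫ t in Ioi 0, f t) + M := by
        gcongr
        exact intervalIntegral_zero_le_setIntegral_Ioi (by positivity) hf hint

lemma abs_exp_neg_sub_exp_neg_le {a b : ℝ} (hab : a ≤ b) :
    |exp (-a) - exp (-b)| ≤ (b - a) * exp (-a) := by
  have hexp : exp (-b) = exp (-a) * exp (a - b) := by rw [← exp_add]; ring_nf
  rw [abs_of_nonneg (sub_nonneg.2 (exp_le_exp.2 (neg_le_neg hab))), hexp]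
  nlinarith [exp_pos (-a), add_one_le_exp (a - b)]

lemma summable_moebius_div_sq_mul_exp {x : ℝ} (hx : 0 ≤ x) :
    Summable fun n : ℕ => (μ n : ℝ) / (n : ℝ) ^ 2 * exp (-x / (n : ℝ) ^ 2) := by
  refine .of_norm_bounded (Real.summable_nat_pow_inv.2 one_lt_two) fun n => ?_
  rw [Real.norm_eq_abs, abs_mul, abs_of_pos (exp_pos _)]
  exact (mul_le_of_le_one_right (abs_nonneg _) (exp_neg_div_sq_le_one hx n)).trans
    (abs_moebius_div_pow_le le_rfl n)

lemma summable_rieszWeight {x : ℝ} (hx : 0 ≤ x) : Summable fun n : ℕ => rieszWeight x n :=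
  .of_nonneg_of_le (fun n => rieszWeight_nonneg x n) (fun n => rieszWeight_le_inv_pow_four hx n)
    (Real.summable_nat_pow_inv.2 (by norm_num))

lemma abs_moebius_div_sq_mul_exp_sub_le {x y : ℝ} (hxy : x ≤ y) (n : ℕ) :
    |(μ n : ℝ) / (n : ℝ) ^ 2 * exp (-x / (n : ℝ) ^ 2)
        - (μ n : ℝ) / (n : ℝ) ^ 2 * exp (-y / (n : ℝ) ^ 2)| ≤ (y - x) * rieszWeight x n := by
  rcases eq_or_ne n 0 with rfl | hn
  · simp [rieszWeight_zero_right]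
  have hn2 : (0 : ℝ) < (n : ℝ) ^ 2 := by positivity
  rw [← mul_sub, abs_mul, neg_div, neg_div]
  calc |(μ n : ℝ) / (n : ℝ) ^ 2| * |exp (-(x / (n : ℝ) ^ 2)) - exp (-(y / (n : ℝ) ^ 2))|
      ≤ ((n : ℝ) ^ 2)⁻¹ * ((y / (n : ℝ) ^ 2 - x / (n : ℝ) ^ 2) * exp (-(x / (n : ℝ) ^ 2))) :=
        mul_le_mul (abs_moebius_div_pow_le le_rfl n) (abs_exp_neg_sub_exp_neg_le (by gcongr))
          (abs_nonneg _) (by positivity)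
    _ = (y - x) * rieszWeight x n := by
        rw [rieszWeight, neg_div]
        field_simp

lemma abs_rieszR_div_self_sub_le {x y : ℝ} (hx : 0 < x) (hxy : x ≤ y) :
    |RieszR x / x - RieszR y / y| ≤ (y - x) * ∑' n : ℕ, rieszWeight x n := by
  rw [rieszR_div_self hx.ne', rieszR_div_self (hx.trans_le hxy).ne',
    ← (summable_moebius_div_sq_mul_exp hx.le).tsum_sub
      (summable_moebius_div_sq_mul_exp (hx.le.trans hxy)), ← tsum_mul_left, ← Real.norm_eq_abs]
  refine tsum_of_norm_bounded ((summable_rieszWeight hx.le).mul_left _).hasSum fun n => ?_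
  exact abs_moebius_div_sq_mul_exp_sub_le hxy n

lemma tsum_rieszWeight_le {x : ℝ} (hx : 0 < x) :
    ∑' n : ℕ, rieszWeight x n ≤ √π / 4 * x ^ (-(3 : ℝ) / 2) + 4 / exp 2 * x ^ (-(2 : ℝ)) := by
  have h := tsum_nat_le_integral_add_of_unimodal (sqrt_nonneg (x / 2))
    (fun t _ => rieszWeight_nonneg x t) (fun t _ => rieszWeight_le hx t)
    (monotoneOn_rieszWeight hx) (antitoneOn_rieszWeight hx) (integrableOn_rieszWeight hx)
  rwa [integral_rieszWeight hx, div_eq_mul_inv (4 / exp 2), ← rpow_two, ← rpow_neg hx.le] at h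

lemma exists_tsum_rieszWeight_le :
    ∃ A : ℝ, ∀ x : ℝ, 0 < x → ∑' n : ℕ, rieszWeight x n ≤ A * x ^ (-(3 : ℝ) / 2) := by
  set Z := ∑' n : ℕ, ((n : ℝ) ^ 4)⁻¹
  have hZ : 0 ≤ Z := tsum_nonneg fun n => by positivity
  have hπ : 0 ≤ √π / 4 := by positivity
  have he : 0 ≤ 4 / exp 2 := by positivity
  refine ⟨√π / 4 + 4 / exp 2 + Z, fun x hx => ?_⟩
  have hr : 0 ≤ x ^ (-(3 : ℝ) / 2) := by positivity
  rcases le_or_gt 1 x with h1 | h1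
  · have h2 : x ^ (-(2 : ℝ)) ≤ x ^ (-(3 : ℝ) / 2) := rpow_le_rpow_of_exponent_le h1 (by norm_num)
    calc ∑' n : ℕ, rieszWeight x n
        ≤ √π / 4 * x ^ (-(3 : ℝ) / 2) + 4 / exp 2 * x ^ (-(2 : ℝ)) := tsum_rieszWeight_le hx
      _ ≤ _ := by nlinarith [mul_nonneg hZ hr, mul_le_mul_of_nonneg_left h2 he]
  · have h2 : 1 ≤ x ^ (-(3 : ℝ) / 2) :=
      one_le_rpow_of_pos_of_le_one_of_nonpos hx h1.le (by norm_num)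
    calc ∑' n : ℕ, rieszWeight x n ≤ Z :=
          (summable_rieszWeight hx.le).tsum_le_tsum (fun n => rieszWeight_le_inv_pow_four hx.le n)
            (Real.summable_nat_pow_inv.2 (by norm_num))
      _ ≤ √π / 4 + 4 / exp 2 + Z := by linarith
      _ ≤ _ := le_mul_of_one_le_right (by positivity) h2

theorem stmt13 :
    (∀ x y : ℝ, 0 < x → x < y →
      |RieszR x / x - RieszR y / y| ≤
        (y - x) * (Real.sqrt Real.pi / 4 * x ^ (-(3 : ℝ) / 2)
          + 4 / Real.exp 2 * x ^ (-(2 : ℝ)))) ∧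
    ∃ A : ℝ, ∀ x y : ℝ, 0 < x → x < y →
      |RieszR x / x - RieszR y / y| ≤ A * (y - x) * x ^ (-(3 : ℝ) / 2) := by
  refine ⟨fun x y hx hxy => ?_, ?_⟩
  · exact (abs_rieszR_div_self_sub_le hx hxy.le).trans
      (mul_le_mul_of_nonneg_left (tsum_rieszWeight_le hx) (sub_nonneg.2 hxy.le))
  · obtain ⟨A, hA⟩ := exists_tsum_rieszWeight_le
    refine ⟨A, fun x y hx hxy => (abs_rieszR_div_self_sub_le hx hxy.le).trans ?_⟩
    calc (y - x) * ∑' n : ℕ, rieszWeight x n ≤ (y - x) * (A * x ^ (-(3 : ℝ) / 2)) :=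
          mul_le_mul_of_nonneg_left (hA x hx) (sub_nonneg.2 hxy.le)
      _ = A * (y - x) * x ^ (-(3 : ℝ) / 2) := by ring
end

section
/- For every real number δ > -3/2, the following are equivalent: (i) there exist constants C and x₁ > 0 such that |R(x)| ≤ C x^{δ+1} for all real x ≥ x₁; (ii) there exist a constant C' and a natural number k₁ ≥ 1 such that |c_k| ≤ C' k^δ for all natural numbers k ≥ k₁. -/
/-!
Expanding `1 / ζ(s) = ∑ μ(n) n⁻ˢ` and exchanging summations gives
`R(x) = x ∑ μ(n) n⁻² exp(-x/n²)` and `c_k = ∑ μ(n) n⁻² (1 - n⁻²)ᵏ`.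
For `t ∈ [0, 1]` and `m = ⌊x⌋`, `|exp(-xt) - (1 - t)ᵐ| ≤ e (t + x t²) exp(-xt)`, and
`∑ n⁻²ᵖ exp(-x/n²) = O(x^δ)` for every `δ > 1/2 - p`, so `R(x)/x - c_⌊x⌋ = O(x^δ)` for every
`δ > -3/2`: a bound `O(x^δ)` passes from `R(x)/x` to `c_k` and back.
-/

open Real Filter Asymptotics
open scoped ArithmeticFunction.Moebius

namespace BaezDuarte

lemma ofReal_zetaR (s : ℝ) : (zetaR s : ℂ) = riemannZeta s := by
  have h := riemannZeta_conj s
  rw [Complex.conj_ofReal] at h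
  exact Complex.conj_eq_iff_re.mp h.symm

lemma hasSum_moebius_div_rpow {s : ℝ} (hs : 1 < s) :
    HasSum (fun n : ℕ => (μ n : ℝ) / (n : ℝ) ^ s) (zetaR s)⁻¹ := by
  have hs' : 1 < (s : ℂ).re := by simpa using hs
  have hL : LSeries (fun n => (μ n : ℂ)) s = (zetaR s : ℂ)⁻¹ := by
    rw [ofReal_zetaR, ← ArithmeticFunction.LSeries_zeta_eq_riemannZeta hs']
    exact eq_inv_of_mul_eq_one_right (ArithmeticFunction.LSeries_zeta_mul_Lseries_moebius hs')
  have h := (ArithmeticFunction.LSeriesSummable_moebius_iff.mpr hs').LSeriesHasSum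
  rw [LSeriesHasSum, hL, ← Complex.ofReal_inv] at h
  refine Complex.hasSum_ofReal.mp (h.congr_fun fun n => ?_)
  rcases eq_or_ne n 0 with rfl | hn
  · simp
  · rw [LSeries.term_of_ne_zero hn, Complex.ofReal_div, Complex.ofReal_cpow (Nat.cast_nonneg n)]
    simp

-- `invSq 0 = 0`; harmless, since every sum below carries the factor `μ 0 = 0` or `invSq 0 ^ p`.
noncomputable def invSq (n : ℕ) : ℝ := ((n : ℝ) ^ 2)⁻¹

lemma invSq_nonneg (n : ℕ) : 0 ≤ invSq n := by unfold invSq; positivity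

lemma invSq_le_one (n : ℕ) : invSq n ≤ 1 := by
  rcases n with _ | n
  · simp [invSq]
  · exact inv_le_one_of_one_le₀ (one_le_pow₀ (by simp))

lemma abs_invSq_le_one (n : ℕ) : |invSq n| ≤ 1 := by
  rw [abs_of_nonneg (invSq_nonneg n)]; exact invSq_le_one n

lemma summable_invSq : Summable invSq := Real.summable_nat_pow_inv.mpr one_lt_two

lemma abs_moebius_cast_le_one (n : ℕ) : |(μ n : ℝ)| ≤ 1 := by
  exact_mod_cast ArithmeticFunction.abs_moebius_le_one

lemma hasSum_moebius_mul_invSq_pow (j : ℕ) :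
    HasSum (fun n => (μ n : ℝ) * invSq n ^ (j + 1)) (zetaR (2 * j + 2))⁻¹ := by
  have h := hasSum_moebius_div_rpow (s := 2 * j + 2) (by linarith [(j.cast_nonneg : (0:ℝ) ≤ j)])
  convert h using 2 with n
  rw [invSq, inv_pow, ← pow_mul, div_eq_mul_inv,
    show (2 * j + 2 : ℝ) = ((2 * (j + 1) : ℕ) : ℝ) by push_cast; ring, Real.rpow_natCast]

lemma summable_moebius_mul_invSq : Summable fun n => (μ n : ℝ) * invSq n :=
  summable_invSq.of_norm_bounded fun n => by
    simpa [abs_mul, abs_of_nonneg (invSq_nonneg n)] using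
      mul_le_mul_of_nonneg_right (abs_moebius_cast_le_one n) (invSq_nonneg n)

lemma _root_.Summable.mul_of_abs_le_one {a b : ℕ → ℝ} (ha : Summable a) (hb : ∀ n, |b n| ≤ 1) :
    Summable fun n => a n * b n :=
  ha.abs.of_norm_bounded fun n => by
    rw [Real.norm_eq_abs, abs_mul]; exact mul_le_of_le_one_right (abs_nonneg _) (hb n)

open Nat in
lemma tsum_mul_exp_mul_eq_tsum_pow_div_factorial {a t : ℕ → ℝ} (ha : Summable a)
    (ht : ∀ n, |t n| ≤ 1) (y : ℝ) :
    ∑' n, a n * exp (y * t n) = ∑' k, y ^ k / k ! * ∑' n, a n * t n ^ k := by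
  set F : ℕ → ℕ → ℝ := fun k n => y ^ k / k ! * (a n * t n ^ k)
  have hF : Summable (Function.uncurry F) := by
    refine (summable_mul_of_summable_norm (f := fun k => |y| ^ k / k !) (g := fun n => |a n|)
      ?_ ?_).of_norm_bounded fun ⟨k, n⟩ => ?_
    · simpa [abs_div] using Real.summable_pow_div_factorial |y|
    · simpa using ha.abs
    · simp only [F, Function.uncurry_apply_pair, norm_mul, norm_div, norm_pow, Real.norm_eq_abs,
        Nat.abs_cast]
      gcongr
      exact mul_le_of_le_one_right (abs_nonneg _) (pow_le_one₀ (abs_nonneg _) (ht n))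
  calc ∑' n, a n * exp (y * t n) = ∑' n, ∑' k, F k n := by
        refine tsum_congr fun n => ?_
        rw [Real.exp_eq_exp_ℝ, ← (NormedSpace.expSeries_div_hasSum_exp (y * t n)).tsum_eq,
          ← tsum_mul_left]
        exact tsum_congr fun k => by simp only [F]; ring
    _ = ∑' k, ∑' n, F k n := hF.tsum_comm
    _ = ∑' k, y ^ k / k ! * ∑' n, a n * t n ^ k := tsum_congr fun k => tsum_mul_left

lemma tsum_mul_one_sub_pow_eq_sum_choose {a t : ℕ → ℝ} (ha : Summable a)
    (ht : ∀ n, |t n| ≤ 1) (k : ℕ) :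
    ∑' n, a n * (1 - t n) ^ k =
      ∑ j ∈ Finset.range (k + 1), (-1) ^ j * k.choose j * ∑' n, a n * t n ^ j := by
  have hs : ∀ j ∈ Finset.range (k + 1),
      Summable fun n => (-1) ^ j * k.choose j * (a n * t n ^ j) := fun j _ =>
    (ha.mul_of_abs_le_one fun n => by
      rw [abs_pow]; exact pow_le_one₀ (abs_nonneg _) (ht n)).mul_left _
  rw [Finset.sum_congr rfl fun j _ => (tsum_mul_left (a := (-1) ^ j * (k.choose j : ℝ))).symm,
    ← Summable.tsum_finsetSum hs]
  refine tsum_congr fun n => ?_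
  rw [sub_eq_neg_add, add_pow, Finset.mul_sum]
  refine Finset.sum_congr rfl fun j _ => ?_
  rw [one_pow, neg_pow]; ring

noncomputable def rieszKernel (x : ℝ) : ℝ := ∑' n, (μ n : ℝ) * invSq n * exp (-x * invSq n)

lemma RieszR_eq_mul_rieszKernel (x : ℝ) : RieszR x = x * rieszKernel x := by
  rw [RieszR, rieszKernel,
    tsum_mul_exp_mul_eq_tsum_pow_div_factorial summable_moebius_mul_invSq abs_invSq_le_one]
  congr 1
  refine tsum_congr fun k => ?_
  have h : ∀ n, (μ n : ℝ) * invSq n * invSq n ^ k = μ n * invSq n ^ (k + 1) := fun n => by ring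
  rw [tsum_congr h, (hasSum_moebius_mul_invSq_pow k).tsum_eq, neg_pow]
  ring

lemma cBD_eq_tsum (k : ℕ) : cBD k = ∑' n, (μ n : ℝ) * invSq n * (1 - invSq n) ^ k := by
  rw [tsum_mul_one_sub_pow_eq_sum_choose summable_moebius_mul_invSq abs_invSq_le_one, cBD]
  refine Finset.sum_congr rfl fun j _ => ?_
  have h : ∀ n, (μ n : ℝ) * invSq n * invSq n ^ j = μ n * invSq n ^ (j + 1) := fun n => by ring
  rw [tsum_congr h, (hasSum_moebius_mul_invSq_pow j).tsum_eq]
  ring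

lemma one_sub_pow_le_exp_neg_mul {t : ℝ} (ht : t ≤ 1) (m : ℕ) : (1 - t) ^ m ≤ exp (-m * t) := by
  rw [neg_mul, ← mul_neg, Real.exp_nat_mul]
  exact pow_le_pow_left₀ (by linarith) (Real.one_sub_le_exp_neg t) m

lemma exp_neg_mul_mul_le_one_sub_pow {t : ℝ} (ht0 : 0 ≤ t) (ht1 : t ≤ 1) (m : ℕ) :
    exp (-m * t) * (1 - m * t ^ 2) ≤ (1 - t) ^ m := by
  -- `1 - t² = (1 - t)(1 + t) ≤ (1 - t) eᵗ`, then Bernoulli's inequality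
  have hbase : exp (-t) * (1 - t ^ 2) ≤ 1 - t := by
    have h := mul_le_mul_of_nonneg_left (Real.add_one_le_exp t) (sub_nonneg.mpr ht1)
    calc exp (-t) * (1 - t ^ 2) = exp (-t) * ((1 - t) * (t + 1)) := by ring
      _ ≤ exp (-t) * ((1 - t) * exp t) := by gcongr
      _ = 1 - t := by rw [mul_left_comm, ← Real.exp_add, neg_add_cancel, Real.exp_zero, mul_one]
  have hsq : 0 ≤ 1 - t ^ 2 := by nlinarith
  calc exp (-m * t) * (1 - m * t ^ 2) ≤ exp (-t) ^ m * (1 - t ^ 2) ^ m := by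
        rw [neg_mul, ← mul_neg, Real.exp_nat_mul, sub_eq_add_neg, sub_eq_add_neg, ← mul_neg]
        gcongr
        exact one_add_mul_le_pow (by nlinarith) m
    _ = (exp (-t) * (1 - t ^ 2)) ^ m := (mul_pow _ _ _).symm
    _ ≤ (1 - t) ^ m := pow_le_pow_left₀ (by positivity) hbase m

lemma abs_exp_neg_mul_sub_one_sub_pow_le {t x : ℝ} {m : ℕ} (ht0 : 0 ≤ t) (ht1 : t ≤ 1)
    (hmx : m ≤ x) (hxm : x ≤ m + 1) :
    |exp (-x * t) - (1 - t) ^ m| ≤ exp 1 * (t + x * t ^ 2) * exp (-x * t) := by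
  have hx_le : exp (-x * t) ≤ exp (-m * t) := by gcongr
  have hx_ge : exp (-m * t) * (1 - t) ≤ exp (-x * t) := by
    calc exp (-m * t) * (1 - t) ≤ exp (-m * t) * exp (-((x - m) * t)) := by
          gcongr
          nlinarith [Real.one_sub_le_exp_neg ((x - m) * t)]
      _ = exp (-x * t) := by rw [← Real.exp_add]; ring_nf
  have hm_le : exp (-m * t) ≤ exp 1 * exp (-x * t) := by
    rw [← Real.exp_add]; gcongr; nlinarith
  have hpow_le := one_sub_pow_le_exp_neg_mul ht1 m
  have hpow_ge := exp_neg_mul_mul_le_one_sub_pow ht0 ht1 m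
  calc |exp (-x * t) - (1 - t) ^ m| ≤ (t + m * t ^ 2) * exp (-m * t) := by
        rw [abs_le]; constructor <;> nlinarith [Real.exp_pos (-m * t)]
    _ ≤ (t + x * t ^ 2) * (exp 1 * exp (-x * t)) := by
        have hx0 : 0 ≤ x := m.cast_nonneg.trans hmx
        gcongr
    _ = exp 1 * (t + x * t ^ 2) * exp (-x * t) := by ring

lemma exp_neg_le_rpow_mul_exp_neg_mul_rpow_neg {a u : ℝ} (ha : 0 ≤ a) (hu : 0 < u) :
    exp (-u) ≤ a ^ a * exp (-a) * u ^ (-a) := by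
  rcases ha.eq_or_lt with rfl | ha
  · simpa using hu.le
  have hpow : u ^ a ≤ a ^ a * exp (u - a) := by
    have h : (u / a) ^ a ≤ exp (u / a - 1) ^ a := by
      gcongr
      linarith [Real.add_one_le_exp (u / a - 1)]
    rwa [← Real.exp_mul, sub_mul, div_mul_cancel₀ _ ha.ne', one_mul,
      Real.div_rpow hu.le ha.le, div_le_iff₀' (by positivity)] at h
  rw [Real.rpow_neg hu.le, ← div_eq_mul_inv, le_div_iff₀ (by positivity)]
  calc exp (-u) * u ^ a ≤ exp (-u) * (a ^ a * exp (u - a)) := by gcongr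
    _ = a ^ a * exp (-a) := by rw [mul_left_comm, ← Real.exp_add]; ring_nf

lemma pow_mul_exp_neg_mul_le {t x a : ℝ} {p : ℕ} (ht : 0 ≤ t) (hx : 0 < x) (ha : 0 ≤ a)
    (hap : a < p) : t ^ p * exp (-x * t) ≤ a ^ a * exp (-a) * x ^ (-a) * t ^ ((p : ℝ) - a) := by
  rcases ht.eq_or_lt with rfl | ht
  · rw [zero_pow (by exact_mod_cast (ha.trans_lt hap).ne'), zero_mul]; positivity
  calc t ^ p * exp (-x * t) = t ^ p * exp (-(x * t)) := by rw [neg_mul]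
    _ ≤ t ^ p * (a ^ a * exp (-a) * (x * t) ^ (-a)) := by
        gcongr; exact exp_neg_le_rpow_mul_exp_neg_mul_rpow_neg ha (by positivity)
    _ = a ^ a * exp (-a) * x ^ (-a) * t ^ ((p : ℝ) - a) := by
        rw [Real.mul_rpow hx.le ht.le, sub_eq_add_neg, Real.rpow_add ht, Real.rpow_natCast]; ring

noncomputable def expWeightSum (p : ℕ) (x : ℝ) : ℝ := ∑' n, invSq n ^ p * exp (-x * invSq n)

lemma summable_invSq_pow_mul_exp {p : ℕ} (hp : p ≠ 0) {x : ℝ} (hx : 0 ≤ x) :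
    Summable fun n => invSq n ^ p * exp (-x * invSq n) := by
  refine summable_invSq.of_nonneg_of_le (fun n => by have := invSq_nonneg n; positivity)
    fun n => ?_
  calc invSq n ^ p * exp (-x * invSq n) ≤ invSq n ^ p * 1 :=
        mul_le_mul_of_nonneg_left (Real.exp_le_one_iff.mpr
          (mul_nonpos_of_nonpos_of_nonneg (neg_nonpos.mpr hx) (invSq_nonneg n)))
          (pow_nonneg (invSq_nonneg n) p)
    _ ≤ invSq n := by rw [mul_one]; exact pow_le_of_le_one (invSq_nonneg n) (invSq_le_one n) hp

lemma summable_invSq_rpow {q : ℝ} (hq : 1 / 2 < q) : Summable fun n => invSq n ^ q := by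
  refine (Real.summable_nat_rpow_inv.mpr (by linarith : 1 < 2 * q)).congr fun n => ?_
  rw [invSq, Real.inv_rpow (by positivity), ← Real.rpow_natCast, ← Real.rpow_mul n.cast_nonneg]
  norm_num

lemma expWeightSum_le {p : ℕ} {a x : ℝ} (ha : 0 ≤ a) (hap : a < p - 1 / 2) (hx : 0 < x) :
    expWeightSum p x ≤ a ^ a * exp (-a) * (∑' n, invSq n ^ ((p : ℝ) - a)) * x ^ (-a) := by
  have hsum := summable_invSq_rpow (q := (p : ℝ) - a) (by linarith)
  rw [mul_right_comm, ← tsum_mul_left]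
  exact Summable.tsum_le_tsum
    (fun n => pow_mul_exp_neg_mul_le (invSq_nonneg n) hx ha (by linarith))
    (summable_invSq_pow_mul_exp (by rintro rfl; norm_num at hap; linarith) hx.le)
    (hsum.mul_left _)

lemma isBigO_expWeightSum {p : ℕ} (hp : p ≠ 0) {δ : ℝ} (hδ : 1 / 2 - p < δ) :
    expWeightSum p =O[atTop] fun x => x ^ δ := by
  set a := max 0 (-δ)
  have hp1 : (1 : ℝ) ≤ p := by exact_mod_cast Nat.one_le_iff_ne_zero.mpr hp
  have hap : a < p - 1 / 2 := max_lt (by linarith) (by linarith)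
  have hK : 0 ≤ a ^ a * exp (-a) * ∑' n, invSq n ^ ((p : ℝ) - a) :=
    mul_nonneg (by positivity) (tsum_nonneg fun n => by have := invSq_nonneg n; positivity)
  refine IsBigO.of_bound (a ^ a * exp (-a) * ∑' n, invSq n ^ ((p : ℝ) - a)) ?_
  filter_upwards [eventually_ge_atTop 1] with x hx
  have hx0 : 0 < x := one_pos.trans_le hx
  have hS : 0 ≤ expWeightSum p x :=
    tsum_nonneg fun n => by have := invSq_nonneg n; positivity
  rw [Real.norm_eq_abs, Real.norm_eq_abs, abs_of_nonneg hS,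
    abs_of_pos (Real.rpow_pos_of_pos hx0 δ)]
  refine (expWeightSum_le (le_max_left _ _) hap hx0).trans
    (mul_le_mul_of_nonneg_left (Real.rpow_le_rpow_of_exponent_le hx ?_) hK)
  exact neg_le.mp (le_max_right _ _)

lemma abs_rieszKernel_sub_cBD_floor_le {x : ℝ} (hx : 0 ≤ x) :
    |rieszKernel x - cBD ⌊x⌋₊| ≤ exp 1 * (expWeightSum 2 x + x * expWeightSum 3 x) := by
  have h2 := summable_invSq_pow_mul_exp two_ne_zero hx
  have h3 := summable_invSq_pow_mul_exp three_ne_zero hx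
  have hbound : HasSum
      (fun n => exp 1 *
        (invSq n ^ 2 * exp (-x * invSq n) + x * (invSq n ^ 3 * exp (-x * invSq n))))
      (exp 1 * (expWeightSum 2 x + x * expWeightSum 3 x)) :=
    (h2.hasSum.add (h3.hasSum.mul_left x)).mul_left _
  have hexp : ∀ n, |exp (-x * invSq n)| ≤ 1 := fun n => by
    rw [abs_of_pos (Real.exp_pos _), Real.exp_le_one_iff]
    exact mul_nonpos_of_nonpos_of_nonneg (neg_nonpos.mpr hx) (invSq_nonneg n)
  have hpow : ∀ n, |(1 - invSq n) ^ ⌊x⌋₊| ≤ 1 := fun n => by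
    rw [abs_pow]
    exact pow_le_one₀ (abs_nonneg _)
      (abs_le.mpr ⟨by linarith [invSq_le_one n], by linarith [invSq_nonneg n]⟩)
  rw [← Real.norm_eq_abs, rieszKernel, cBD_eq_tsum, ← Summable.tsum_sub
    (summable_moebius_mul_invSq.mul_of_abs_le_one hexp)
    (summable_moebius_mul_invSq.mul_of_abs_le_one hpow)]
  refine tsum_of_norm_bounded hbound fun n => ?_
  have ht := invSq_nonneg n
  rw [← mul_sub, Real.norm_eq_abs, abs_mul, abs_mul, abs_of_nonneg ht]
  calc |(μ n : ℝ)| * invSq n * |exp (-x * invSq n) - (1 - invSq n) ^ ⌊x⌋₊|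
      ≤ 1 * invSq n * (exp 1 * (invSq n + x * invSq n ^ 2) * exp (-x * invSq n)) := by
        gcongr
        · exact abs_moebius_cast_le_one n
        · exact abs_exp_neg_mul_sub_one_sub_pow_le ht (invSq_le_one n) (Nat.floor_le hx)
            (Nat.lt_floor_add_one x).le
    _ = _ := by ring

lemma isBigO_rieszKernel_sub_cBD_floor {δ : ℝ} (hδ : -3 / 2 < δ) :
    (fun x => rieszKernel x - cBD ⌊x⌋₊) =O[atTop] fun x => x ^ δ := by
  have h2 : expWeightSum 2 =O[atTop] fun x => x ^ δ :=
    isBigO_expWeightSum two_ne_zero (by norm_num; linarith)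
  have h3 : (fun x => x * expWeightSum 3 x) =O[atTop] fun x => x ^ δ := by
    refine ((isBigO_refl (fun x : ℝ => x) atTop).mul
      (isBigO_expWeightSum three_ne_zero (δ := δ - 1) (by norm_num; linarith))).congr'
      EventuallyEq.rfl ?_
    filter_upwards [eventually_gt_atTop 0] with x hx
    rw [Real.rpow_sub_one hx.ne', mul_div_cancel₀ _ hx.ne']
  refine IsBigO.trans ?_ ((h2.add h3).const_mul_left (exp 1))
  refine IsBigO.of_bound 1 ?_
  filter_upwards [eventually_ge_atTop 0] with x hx
  rw [one_mul, Real.norm_eq_abs, Real.norm_eq_abs]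
  exact (abs_rieszKernel_sub_cBD_floor_le hx).trans (le_abs_self _)

lemma isBigO_mul_rpow_add_one_iff {f : ℝ → ℝ} {δ : ℝ} :
    (fun x => x * f x) =O[atTop] (fun x => x ^ (δ + 1)) ↔ f =O[atTop] fun x => x ^ δ := by
  have hpow : (fun x : ℝ => x ^ (δ + 1)) =ᶠ[atTop] fun x => x * x ^ δ := by
    filter_upwards [eventually_gt_atTop 0] with x hx
    rw [Real.rpow_add_one hx.ne', mul_comm]
  rw [isBigO_congr EventuallyEq.rfl hpow]
  refine ⟨fun h => ?_, (isBigO_refl _ _).mul⟩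
  have hcancel : ∀ g : ℝ → ℝ, (fun x => x⁻¹ * (x * g x)) =ᶠ[atTop] g := fun g => by
    filter_upwards [eventually_ne_atTop 0] with x hx
    rw [inv_mul_cancel_left₀ hx]
  exact ((isBigO_refl (fun x : ℝ => x⁻¹) atTop).mul h).congr' (hcancel f) (hcancel _)

lemma exists_bound_iff_isBigO_rpow {f : ℝ → ℝ} {e : ℝ} :
    (∃ C x₁ : ℝ, 0 < x₁ ∧ ∀ x : ℝ, x₁ ≤ x → |f x| ≤ C * x ^ e) ↔
      f =O[atTop] fun x => x ^ e := by
  simp only [isBigO_iff, eventually_atTop, Real.norm_eq_abs]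
  constructor
  · rintro ⟨C, x₁, hx₁, h⟩
    refine ⟨C, x₁, fun x hx => ?_⟩
    rw [abs_of_nonneg (Real.rpow_nonneg (hx₁.le.trans hx) e)]
    exact h x hx
  · rintro ⟨C, x₁, h⟩
    refine ⟨C, max x₁ 1, by positivity, fun x hx => ?_⟩
    have hx0 : 0 ≤ x := zero_le_one.trans ((le_max_right _ _).trans hx)
    rw [← abs_of_nonneg (Real.rpow_nonneg hx0 e)]
    exact h x ((le_max_left _ _).trans hx)

lemma exists_bound_iff_isBigO_natCast_rpow {c : ℕ → ℝ} {e : ℝ} :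
    (∃ C : ℝ, ∃ k₁ : ℕ, 1 ≤ k₁ ∧ ∀ k : ℕ, k₁ ≤ k → |c k| ≤ C * (k : ℝ) ^ e) ↔
      c =O[atTop] fun k => (k : ℝ) ^ e := by
  simp only [isBigO_iff, eventually_atTop, Real.norm_eq_abs,
    abs_of_nonneg (Real.rpow_nonneg (Nat.cast_nonneg _) e)]
  constructor
  · rintro ⟨C, k₁, -, h⟩
    exact ⟨C, k₁, h⟩
  · rintro ⟨C, k₁, h⟩
    exact ⟨C, max k₁ 1, le_max_right _ _, fun k hk => h k ((le_max_left _ _).trans hk)⟩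

end BaezDuarte

open BaezDuarte

theorem stmt14 (δ : ℝ) (hδ : -3 / 2 < δ) :
    (∃ C x₁ : ℝ, 0 < x₁ ∧ ∀ x : ℝ, x₁ ≤ x → |RieszR x| ≤ C * x ^ (δ + 1)) ↔
    (∃ C' : ℝ, ∃ k₁ : ℕ, 1 ≤ k₁ ∧ ∀ k : ℕ, k₁ ≤ k → |cBD k| ≤ C' * (k : ℝ) ^ δ) := by
  have hR : RieszR = fun x => x * rieszKernel x := funext RieszR_eq_mul_rieszKernel
  rw [exists_bound_iff_isBigO_rpow, exists_bound_iff_isBigO_natCast_rpow, hR,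
    isBigO_mul_rpow_add_one_iff]
  have hE := isBigO_rieszKernel_sub_cBD_floor hδ
  constructor
  · intro hg
    refine ((hg.sub hE).comp_tendsto tendsto_natCast_atTop_atTop).congr_left fun k => ?_
    simp
  · intro hc
    have hfloor : (fun x : ℝ => (⌊x⌋₊ : ℝ) ^ δ) =O[atTop] fun x => x ^ δ :=
      (isEquivalent_nat_floor.isTheta.rpow (Eventually.of_forall fun x => Nat.cast_nonneg _)
        (eventually_ge_atTop 0)).isBigO
    refine (((hc.comp_tendsto tendsto_nat_floor_atTop).trans hfloor).add hE).congr_left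
      fun x => ?_
    simp
end

section
/- For every real number x > 0, the Riesz function satisfies R(x) = x·(6/π² + ∑_{n=1}^∞ (μ(n)/n²)(exp(-x/n²) - 1)), and the series on the right converges absolutely. -/
open ArithmeticFunction

/-!
Expanding `1 / ζ(2k+2) = ∑ μ(n) / n^(2k+2)` turns the Riesz series into a double series
`x ∑_k ∑_n (-x/n²)^k / k! · μ(n)/n²`, which is absolutely summable because `|μ| ≤ 1`.
Summing over `k` first gives `x ∑_n μ(n)/n² · exp(-x/n²)`, and subtracting
`∑_n μ(n)/n² = 1/ζ(2) = 6/π²` from the inner sum gives the stated series.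
-/

open Real LSeries.notation
open scoped ArithmeticFunction.Moebius

lemma ofReal_zetaR (s : ℝ) : (zetaR s : ℂ) = riemannZeta s :=
  Complex.conj_eq_iff_re.mp <| by rw [← riemannZeta_conj, Complex.conj_ofReal]

lemma zetaR_two : zetaR 2 = π ^ 2 / 6 := by
  apply Complex.ofReal_injective
  rw [ofReal_zetaR, Complex.ofReal_ofNat, riemannZeta_two]
  push_cast
  ring

lemma ofReal_tsum_moebius_div_pow (m : ℕ) :
    ((∑' n : ℕ, (μ (n + 1) : ℝ) / ((n : ℝ) + 1) ^ m : ℝ) : ℂ) = L ↗μ m := by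
  rw [Complex.ofReal_tsum, LSeries, ← tsum_pnat_eq_tsum_of_eq_zero (LSeries.term_zero _ _),
    tsum_pnat_eq_tsum_succ]
  refine tsum_congr fun n => ?_
  rw [LSeries.term_of_ne_zero n.succ_ne_zero, Complex.cpow_natCast]
  push_cast
  rfl

lemma tsum_moebius_div_pow {m : ℕ} (hm : 1 < m) :
    ∑' n : ℕ, (μ (n + 1) : ℝ) / ((n : ℝ) + 1) ^ m = (zetaR m)⁻¹ := by
  have hs : 1 < (m : ℂ).re := by simpa using hm
  apply Complex.ofReal_injective
  rw [ofReal_tsum_moebius_div_pow, Complex.ofReal_inv, ofReal_zetaR, Complex.ofReal_natCast,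
    ← LSeries_zeta_eq_riemannZeta hs]
  exact (eq_inv_of_mul_eq_one_right (LSeries_zeta_mul_Lseries_moebius hs))

lemma summable_one_div_nat_add_one_pow {m : ℕ} (hm : 1 < m) :
    Summable fun n : ℕ => 1 / ((n : ℝ) + 1) ^ m := by
  simpa using (summable_nat_add_iff 1).mpr (Real.summable_one_div_nat_pow.mpr hm)

lemma summable_moebius_div_pow {m : ℕ} (hm : 1 < m) :
    Summable fun n : ℕ => (μ (n + 1) : ℝ) / ((n : ℝ) + 1) ^ m := by
  refine (summable_one_div_nat_add_one_pow hm).of_norm_bounded fun n => ?_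
  rw [Real.norm_eq_abs, abs_div, abs_of_pos (a := ((n : ℝ) + 1) ^ m) (by positivity)]
  gcongr
  exact_mod_cast abs_moebius_le_one

section ExpSeries

variable {a : ℕ → ℝ}

lemma abs_neg_div_sq_le (x : ℝ) (n : ℕ) : |-x / ((n : ℝ) + 1) ^ 2| ≤ |x| := by
  rw [abs_div, abs_neg, abs_of_pos (a := ((n : ℝ) + 1) ^ 2) (by positivity)]
  exact div_le_self (abs_nonneg x) (one_le_pow₀ (by linarith [n.cast_nonneg (α := ℝ)]))

lemma Summable.mul_exp_neg_div_sq (ha : Summable fun n : ℕ => a n / ((n : ℝ) + 1) ^ 2) (x : ℝ) :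
    Summable fun n : ℕ => a n / ((n : ℝ) + 1) ^ 2 * exp (-x / ((n : ℝ) + 1) ^ 2) := by
  refine (ha.abs.mul_right (exp |x|)).of_norm_bounded fun n => ?_
  rw [Real.norm_eq_abs, abs_mul, abs_of_pos (exp_pos _)]
  gcongr
  exact (le_abs_self _).trans (abs_neg_div_sq_le x n)

lemma Summable.uncurry_exp_series (ha : Summable fun n : ℕ => a n / ((n : ℝ) + 1) ^ 2) (x : ℝ) :
    Summable (Function.uncurry fun (k n : ℕ) =>
      (-x / ((n : ℝ) + 1) ^ 2) ^ k / k.factorial * (a n / ((n : ℝ) + 1) ^ 2)) := by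
  refine ((Real.summable_pow_div_factorial |x|).mul_of_nonneg ha.abs (fun k => by positivity)
    (fun n => abs_nonneg _)).of_norm_bounded fun ⟨k, n⟩ => ?_
  have hpow : |-x / ((n : ℝ) + 1) ^ 2| ^ k ≤ |x| ^ k :=
    pow_le_pow_left₀ (abs_nonneg _) (abs_neg_div_sq_le x n) k
  rw [Function.uncurry_apply_pair, Real.norm_eq_abs, abs_mul, abs_div, abs_pow,
    Nat.abs_cast]
  gcongr

lemma tsum_exp_series_comm (ha : Summable fun n : ℕ => a n / ((n : ℝ) + 1) ^ 2) (x : ℝ) :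
    ∑' k : ℕ, (-x) ^ k / k.factorial * ∑' n : ℕ, a n / ((n : ℝ) + 1) ^ (2 * k + 2) =
      ∑' n : ℕ, a n / ((n : ℝ) + 1) ^ 2 * exp (-x / ((n : ℝ) + 1) ^ 2) := by
  calc _ = ∑' (k : ℕ) (n : ℕ),
          (-x / ((n : ℝ) + 1) ^ 2) ^ k / k.factorial * (a n / ((n : ℝ) + 1) ^ 2) := by
        refine tsum_congr fun k => ?_
        rw [← tsum_mul_left]
        refine tsum_congr fun n => ?_
        rw [div_pow, ← pow_mul, pow_add]
        field_simp
    _ = ∑' (n : ℕ) (k : ℕ),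
          (-x / ((n : ℝ) + 1) ^ 2) ^ k / k.factorial * (a n / ((n : ℝ) + 1) ^ 2) :=
        (ha.uncurry_exp_series x).tsum_comm.symm
    _ = _ := by
        refine tsum_congr fun n => ?_
        rw [tsum_mul_right, exp_eq_exp_ℝ, (NormedSpace.expSeries_div_hasSum_exp _).tsum_eq,
          mul_comm]

end ExpSeries

lemma RieszR_eq_tsum_moebius_mul_exp (x : ℝ) :
    RieszR x =
      x * ∑' n : ℕ, (μ (n + 1) : ℝ) / ((n : ℝ) + 1) ^ 2 * exp (-x / ((n : ℝ) + 1) ^ 2) := by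
  rw [RieszR, ← tsum_exp_series_comm (summable_moebius_div_pow one_lt_two)]
  congr 1
  refine tsum_congr fun k => ?_
  rw [tsum_moebius_div_pow (by omega : 1 < 2 * k + 2), neg_pow]
  push_cast
  ring

theorem stmt16_general (x : ℝ) :
    Summable (fun n : ℕ =>
      |((moebius (n + 1) : ℤ) : ℝ) / ((n : ℝ) + 1) ^ 2 *
        (Real.exp (-x / ((n : ℝ) + 1) ^ 2) - 1)|) ∧
    RieszR x =
      x * (6 / Real.pi ^ 2 + ∑' n : ℕ,
        ((moebius (n + 1) : ℤ) : ℝ) / ((n : ℝ) + 1) ^ 2 *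
          (Real.exp (-x / ((n : ℝ) + 1) ^ 2) - 1)) := by
  have hμ := summable_moebius_div_pow one_lt_two
  have hdiff : Summable fun n : ℕ => (μ (n + 1) : ℝ) / ((n : ℝ) + 1) ^ 2 *
      (exp (-x / ((n : ℝ) + 1) ^ 2) - 1) :=
    ((hμ.mul_exp_neg_div_sq x).sub hμ).congr fun n => by ring
  refine ⟨hdiff.abs, ?_⟩
  have hμ_tsum : ∑' n : ℕ, (μ (n + 1) : ℝ) / ((n : ℝ) + 1) ^ 2 = 6 / π ^ 2 := by
    rw [tsum_moebius_div_pow one_lt_two, Nat.cast_two, zetaR_two, inv_div]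
  rw [RieszR_eq_tsum_moebius_mul_exp, ← hμ_tsum, ← hμ.tsum_add hdiff]
  congr 1
  exact tsum_congr fun n => by ring

theorem stmt16 (x : ℝ) (hx : 0 < x) :
    Summable (fun n : ℕ =>
      |((moebius (n + 1) : ℤ) : ℝ) / ((n : ℝ) + 1) ^ 2 *
        (Real.exp (-x / ((n : ℝ) + 1) ^ 2) - 1)|) ∧
    RieszR x =
      x * (6 / Real.pi ^ 2 + ∑' n : ℕ,
        ((moebius (n + 1) : ℤ) : ℝ) / ((n : ℝ) + 1) ^ 2 *
          (Real.exp (-x / ((n : ℝ) + 1) ^ 2) - 1)) :=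
  stmt16_general x
end
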